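/- arXiv:2404.03513 — 12 statements merged into one kernel-verified Lean document; each statement's English description precedes it below -/
import Mathlib

section
/- There exists a constant C > 0 such that for every integer n ≥ 1 and every t ∈ [0,1], one has |#{k ∈ ℕ : 1 ≤ k ≤ n and {√k} ≤ t} − t·n| ≤ C·√n. -/
open Finset

private lemma gauss_icc (s : ℕ) : 2 * ∑ m ∈ Finset.Icc 1 s, m = s * (s + 1) := by
  induction s with
  | zero => simp
  | succ n ih =>
      rw [Finset.sum_Icc_succ_top (by omega)]
      ring_nf
      ring_nf at ih
      omega

private lemma gauss_icc_real (s : ℕ) :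
    ∑ m ∈ Finset.Icc 1 s, (m : ℝ) = s * (s + 1) / 2 := by
  have h := gauss_icc s
  have h2 : ((2 * ∑ m ∈ Finset.Icc 1 s, m : ℕ) : ℝ) = ((s * (s + 1) : ℕ) : ℝ) :=
    Nat.cast_inj.mpr h
  push_cast at h2
  linarith

/-- There is a constant `C > 0` such that for all `n ≥ 1` and `t ∈ [0,1]`,
`|#{1 ≤ k ≤ n : {√k} ≤ t} − t·n| ≤ C·√n`. -/
theorem fract_sqrt_discrepancy :
    ∃ C : ℝ, 0 < C ∧ ∀ n : ℕ, 1 ≤ n → ∀ t ∈ Set.Icc (0 : ℝ) 1,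
      |(((Finset.Icc 1 n).filter fun k : ℕ => Int.fract (Real.sqrt k) ≤ t).card : ℝ)
        - t * n| ≤ C * Real.sqrt n := by
  refine ⟨3, by norm_num, fun n hn t ht => ?_⟩
  obtain ⟨ht0, ht1⟩ := ht
  set s := Nat.sqrt n with hs
  have hs1 : 1 ≤ s := by rw [hs]; exact Nat.sqrt_pos.mpr hn
  have hsn : s ^ 2 ≤ n := Nat.sqrt_le' n
  have hns : n < (s + 1) ^ 2 := Nat.lt_succ_sqrt' n
  set S := (Finset.Icc 1 n).filter fun k : ℕ => Int.fract (Real.sqrt k) ≤ t with hS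
  clear_value S
  have hmem : ∀ k ∈ S, Nat.sqrt k ∈ Finset.Icc 1 s := by
    intro k hk
    simp only [hS, Finset.mem_filter, Finset.mem_Icc] at hk ⊢
    exact ⟨Nat.sqrt_pos.mpr hk.1.1, Nat.sqrt_le_sqrt hk.1.2⟩
  have hcard := Finset.card_eq_sum_card_fiberwise hmem
  have sqrt_cast : ∀ k m : ℕ, m ^ 2 ≤ k → (m : ℝ) ≤ Real.sqrt k := by
    intro k m h
    have h' : ((m:ℝ))^2 ≤ (k:ℝ) := by exact_mod_cast h
    calc (m:ℝ) = Real.sqrt ((m:ℝ)^2) := (Real.sqrt_sq (by positivity)).symm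
      _ ≤ Real.sqrt k := Real.sqrt_le_sqrt h'
  have fract_eq : ∀ k m : ℕ, Nat.sqrt k = m → Int.fract (Real.sqrt k) = Real.sqrt k - m := by
    intro k m hkm
    have h1 : (m : ℝ) ≤ Real.sqrt k := sqrt_cast k m (hkm ▸ Nat.sqrt_le' k)
    have h2 : Real.sqrt k < m + 1 := by
      have hk : k < (m + 1) ^ 2 := by
        have := Nat.lt_succ_sqrt' k; rwa [hkm] at this
      have h3 : Real.sqrt k < Real.sqrt (((m:ℝ) + 1) ^ 2) := by
        apply Real.sqrt_lt_sqrt (by positivity)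
        have : (k:ℝ) < ((m+1:ℕ):ℝ)^2 := by exact_mod_cast hk
        push_cast at this; linarith
      rwa [Real.sqrt_sq (by positivity)] at h3
    rw [Int.fract]
    have hfl : ⌊Real.sqrt k⌋ = (m : ℤ) := by
      apply Int.floor_eq_iff.mpr
      exact ⟨by exact_mod_cast h1, by push_cast; exact h2⟩
    rw [hfl]; norm_num
  -- upper bound per fiber
  have upper : ∀ m ∈ Finset.Icc 1 s,
      ((S.filter fun k => Nat.sqrt k = m).card : ℝ) ≤ 2 * m * t + 2 := by
    intro m hm
    rw [Finset.mem_Icc] at hm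
    set f := ⌊((m : ℝ) + t) ^ 2⌋₊ with hf
    have hmf : m ^ 2 ≤ f := by
      apply Nat.le_floor; push_cast
      nlinarith [mul_nonneg (Nat.cast_nonneg (α := ℝ) m) ht0, sq_nonneg t]
    have hsub : (S.filter fun k => Nat.sqrt k = m) ⊆ Finset.Icc (m ^ 2) f := by
      intro k hk
      simp only [hS, Finset.mem_filter, Finset.mem_Icc] at hk ⊢
      obtain ⟨⟨⟨hk1, hkn⟩, hkt⟩, hkm⟩ := hk
      refine ⟨hkm ▸ Nat.sqrt_le' k, ?_⟩
      apply Nat.le_floor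
      rw [fract_eq k m hkm] at hkt
      have hle : Real.sqrt k ≤ (m : ℝ) + t := by linarith
      exact (Real.sqrt_le_left (by positivity : (0:ℝ) ≤ (m:ℝ) + t)).mp hle
    have hcardle := Finset.card_le_card hsub
    rw [Nat.card_Icc] at hcardle
    have hfR : (f : ℝ) ≤ ((m : ℝ) + t) ^ 2 := Nat.floor_le (by positivity)
    have h1 : (S.filter fun k => Nat.sqrt k = m).card + m ^ 2 ≤ f + 1 := by omega
    have h1R := (Nat.cast_le (α := ℝ)).mpr h1
    push_cast at h1R
    nlinarith
  -- lower bound per fiber, m ≤ s - 1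
  have lower : ∀ m ∈ Finset.Icc 1 (s - 1),
      2 * (m : ℝ) * t ≤ ((S.filter fun k => Nat.sqrt k = m).card : ℝ) := by
    intro m hm
    rw [Finset.mem_Icc] at hm
    have hms : m + 1 ≤ s := by omega
    set f := ⌊((m : ℝ) + t) ^ 2⌋₊ with hf
    have hmf : m ^ 2 ≤ f := by
      apply Nat.le_floor; push_cast
      nlinarith [mul_nonneg (Nat.cast_nonneg (α := ℝ) m) ht0, sq_nonneg t]
    set b := min (m ^ 2 + 2 * m) f with hb
    have hmb : m ^ 2 ≤ b := le_min (by omega) hmf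
    have hsub : Finset.Icc (m ^ 2) b ⊆ S.filter fun k => Nat.sqrt k = m := by
      intro k hk
      rw [Finset.mem_Icc] at hk
      obtain ⟨hk1, hk2⟩ := hk
      have hkb1 : k ≤ m ^ 2 + 2 * m := le_trans hk2 (min_le_left _ _)
      have hkb2 : k ≤ f := le_trans hk2 (min_le_right _ _)
      have hexp : (m + 1) ^ 2 = m ^ 2 + 2 * m + 1 := by ring
      have hkm : Nat.sqrt k = m := by
        have hge : m ≤ Nat.sqrt k := Nat.le_sqrt'.mpr hk1
        have hlt : Nat.sqrt k < m + 1 := Nat.sqrt_lt'.mpr (by omega)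
        omega
      have hksq : (k : ℝ) ≤ ((m : ℝ) + t) ^ 2 := by
        calc (k : ℝ) ≤ (f : ℝ) := by exact_mod_cast hkb2
          _ ≤ _ := Nat.floor_le (by positivity)
      have hkle : Real.sqrt k ≤ (m : ℝ) + t :=
        (Real.sqrt_le_left (by positivity)).mpr hksq
      simp only [hS, Finset.mem_filter, Finset.mem_Icc]
      have hm2 : 1 ≤ m ^ 2 := Nat.one_le_pow 2 m (by omega)
      refine ⟨⟨⟨by omega, ?_⟩, ?_⟩, hkm⟩
      · have h2 := Nat.pow_le_pow_left hms 2
        omega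
      · rw [fract_eq k m hkm]; linarith
    have hbR : (m : ℝ) ^ 2 + 2 * (m : ℝ) * t - 1 ≤ (b : ℝ) := by
      rw [hb]
      push_cast [Nat.cast_min]
      apply le_min
      · nlinarith
      · have := Nat.sub_one_lt_floor (((m : ℝ) + t) ^ 2)
        nlinarith [this]
    have h2 : (Finset.Icc (m ^ 2) b).card ≤ (S.filter fun k => Nat.sqrt k = m).card :=
      Finset.card_le_card hsub
    rw [Nat.card_Icc] at h2
    have h1 : b + 1 ≤ (S.filter fun k => Nat.sqrt k = m).card + m ^ 2 := by omega
    have h1R := (Nat.cast_le (α := ℝ)).mpr h1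
    push_cast at h1R
    linarith
  -- assemble
  have hcast : (S.card : ℝ) = ∑ m ∈ Finset.Icc 1 s, ((S.filter fun k => Nat.sqrt k = m).card : ℝ) := by
    rw [hcard]; push_cast; ring
  have hnsR : (n : ℝ) ≤ (s:ℝ)^2 + 2*s := by
    have : n ≤ s^2 + 2*s := by nlinarith
    exact_mod_cast this
  have hsnR : ((s:ℝ))^2 ≤ n := by exact_mod_cast hsn
  have hsR1 : (1:ℝ) ≤ s := by exact_mod_cast hs1
  have hub : (S.card : ℝ) ≤ t * n + 3 * s := by
    rw [hcast]
    calc ∑ m ∈ Finset.Icc 1 s, ((S.filter fun k => Nat.sqrt k = m).card : ℝ)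
        ≤ ∑ m ∈ Finset.Icc 1 s, (2 * (m:ℝ) * t + 2) := Finset.sum_le_sum upper
      _ = ∑ m ∈ Finset.Icc 1 s, (2 * t * (m:ℝ) + 2) := by
          apply Finset.sum_congr rfl; intros; ring
      _ = 2 * t * (∑ m ∈ Finset.Icc 1 s, (m : ℝ)) + 2 * s := by
          rw [Finset.sum_add_distrib, ← Finset.mul_sum, Finset.sum_const, Nat.card_Icc,
            Nat.add_sub_cancel, nsmul_eq_mul]
          ring
      _ = t * ((s:ℝ) * (s + 1)) + 2 * s := by rw [gauss_icc_real]; ring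
      _ ≤ t * n + 3 * s := by nlinarith
  have hlb : t * n - 3 * s ≤ (S.card : ℝ) := by
    rw [hcast]
    have hsubset : Finset.Icc 1 (s - 1) ⊆ Finset.Icc 1 s := Finset.Icc_subset_Icc_right (by omega)
    have hstep : ∑ m ∈ Finset.Icc 1 (s-1), ((S.filter fun k => Nat.sqrt k = m).card : ℝ)
        ≤ ∑ m ∈ Finset.Icc 1 s, ((S.filter fun k => Nat.sqrt k = m).card : ℝ) :=
      Finset.sum_le_sum_of_subset_of_nonneg hsubset (fun i _ _ => by positivity)
    have hlow : ∑ m ∈ Finset.Icc 1 (s-1), (2 * (m:ℝ) * t)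
        ≤ ∑ m ∈ Finset.Icc 1 (s-1), ((S.filter fun k => Nat.sqrt k = m).card : ℝ) :=
      Finset.sum_le_sum lower
    have hgauss : ∑ m ∈ Finset.Icc 1 (s-1), (2 * (m:ℝ) * t)
        = 2 * t * (((s-1:ℕ):ℝ) * ((s-1:ℕ) + 1) / 2) := by
      rw [← gauss_icc_real (s-1), Finset.mul_sum]
      apply Finset.sum_congr rfl
      intros; ring
    have hcastS : ((s-1:ℕ):ℝ) = (s:ℝ) - 1 := by
      have : ((s-1:ℕ):ℝ) = ((s:ℕ):ℝ) - ((1:ℕ):ℝ) := by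
        rw [Nat.cast_sub hs1]
      simpa using this
    rw [hcastS] at hgauss
    have hg2 : ∑ m ∈ Finset.Icc 1 (s-1), (2 * (m:ℝ) * t) = t * ((s:ℝ)^2 - s) := by
      rw [hgauss]; ring
    have p1 : t * (n:ℝ) ≤ t * ((s:ℝ)^2 + 2*s) := mul_le_mul_of_nonneg_left hnsR ht0
    have p1' : t * ((s:ℝ)^2 + 2*s) = t * (s:ℝ)^2 + 2 * (t * s) := by ring
    have p2 : t * (s:ℝ) ≤ (s:ℝ) := mul_le_of_le_one_left (by positivity) ht1
    linarith
  have hsqrt : (s : ℝ) ≤ Real.sqrt n := by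
    rw [show ((s:ℝ)) = Real.sqrt ((s:ℝ)^2) from (Real.sqrt_sq (by positivity)).symm]
    exact Real.sqrt_le_sqrt hsnR
  have habs : |(S.card : ℝ) - t * n| ≤ 3 * (s:ℝ) := by
    rw [abs_le]; constructor <;> linarith
  calc |(S.card : ℝ) - t * n| ≤ 3 * (s:ℝ) := habs
    _ ≤ 3 * Real.sqrt n := by linarith
end

section
/- The limit lim_{n→∞} (1/n) Σ_{k=1}^n sin({√k}) exists and equals 1 − cos(1). -/
open Filter Topology Finset Real

/-!
On the block `m² ≤ k < (m + 1)²` we have `{√k} = √k - m = (k - m²) / (2m) + O(1 / m)`, so the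
block contributes, up to `O(1)`, the Riemann sum `∑_{j ≤ 2m} sin (j / 2m) = 2m ∫₀¹ sin + O(1)
= 2m (1 - cos 1) + O(1)`. Summing over the `≈ √n` blocks below `n` gives
`∑_{k ≤ n} sin {√k} = n (1 - cos 1) + O(√n)`.
-/

theorem Finset.sum_Ico_eq_sum_range_sum_Ico {M : Type*} [AddCommMonoid M] (f : ℕ → M)
    {u : ℕ → ℕ} (hu : Monotone u) (n : ℕ) :
    ∑ k ∈ Ico (u 0) (u n), f k = ∑ i ∈ range n, ∑ k ∈ Ico (u i) (u (i + 1)), f k := by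
  induction n with
  | zero => simp
  | succ n ih =>
    rw [sum_range_succ, ← ih, sum_Ico_consecutive _ (hu n.zero_le) (hu n.le_succ)]

theorem norm_sum_range_le_of_norm_sum_Ico_sq_le {E : Type*} [SeminormedAddCommGroup E]
    {g : ℕ → E} {A B : ℝ} (hg : ∀ k, ‖g k‖ ≤ A)
    (hB : ∀ m, ‖∑ k ∈ Ico (m ^ 2) ((m + 1) ^ 2), g k‖ ≤ B) (N : ℕ) :
    ‖∑ k ∈ range N, g k‖ ≤ (B + 2 * A) * Nat.sqrt N := by
  have hMN : Nat.sqrt N ^ 2 ≤ N := Nat.sqrt_le' N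
  have hNM : N < (Nat.sqrt N + 1) ^ 2 := Nat.lt_succ_sqrt' N
  set M := Nat.sqrt N
  have hA : 0 ≤ A := (norm_nonneg _).trans (hg 0)
  have hblocks : ‖∑ k ∈ range (M ^ 2), g k‖ ≤ M * B := by
    rw [range_eq_Ico, ← zero_pow two_ne_zero,
      sum_Ico_eq_sum_range_sum_Ico g (u := (· ^ 2)) (Nat.pow_left_strictMono two_ne_zero).monotone]
    refine (norm_sum_le _ _).trans ?_
    simpa using sum_le_card_nsmul (range M) _ B fun m _ ↦ hB m
  have htail : ‖∑ k ∈ Ico (M ^ 2) N, g k‖ ≤ 2 * M * A := by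
    refine (norm_sum_le _ _).trans <| (sum_le_card_nsmul _ _ A fun k _ ↦ hg k).trans ?_
    rw [Nat.card_Ico, nsmul_eq_mul]
    gcongr
    rw [add_sq] at hNM
    exact_mod_cast (by omega : N - M ^ 2 ≤ 2 * M)
  calc ‖∑ k ∈ range N, g k‖
      = ‖∑ k ∈ range (M ^ 2), g k + ∑ k ∈ Ico (M ^ 2) N, g k‖ := by
        rw [sum_range_add_sum_Ico _ hMN]
    _ ≤ M * B + 2 * M * A := (norm_add_le _ _).trans (add_le_add hblocks htail)
    _ = (B + 2 * A) * M := by ring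

theorem MonotoneOn.sum_range_succ_div_sub_integral_mem_Icc {f : ℝ → ℝ}
    (hf : MonotoneOn f (Set.Icc 0 1)) (N : ℕ) :
    ∑ j ∈ range (N + 1), f (j / N) - N * ∫ x in (0 : ℝ)..1, f x ∈ Set.Icc (f 0) (f 1) := by
  rcases N.eq_zero_or_pos with rfl | hN
  · simpa using hf (by simp) (by simp) zero_le_one
  have hN' : (0 : ℝ) < N := by positivity
  have hscaled : MonotoneOn (fun x ↦ f (x / N)) (Set.Icc 0 (0 + N)) := by
    rw [zero_add]
    exact hf.comp (fun x _ y _ hxy ↦ by gcongr)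
      fun x hx ↦ ⟨div_nonneg hx.1 hN'.le, (div_le_one hN').2 hx.2⟩
  have hint : ∫ x in (0 : ℝ)..N, f (x / N) = N * ∫ x in (0 : ℝ)..1, f x := by
    rw [intervalIntegral.integral_comp_div _ hN'.ne', zero_div, div_self hN'.ne', smul_eq_mul]
  have hlower := hscaled.sum_le_integral
  have hupper := hscaled.integral_le_sum
  simp only [zero_add] at hlower hupper
  rw [hint] at hlower hupper
  have hlast : ∑ j ∈ range (N + 1), f (j / N) = ∑ j ∈ range N, f (j / N) + f 1 := by
    rw [sum_range_succ, div_self hN'.ne']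
  have hfirst : ∑ j ∈ range (N + 1), f (j / N) = ∑ j ∈ range N, f ((j + 1 : ℕ) / N) + f 0 := by
    rw [sum_range_succ', Nat.cast_zero, zero_div]
  constructor <;> linarith

theorem abs_sum_range_succ_sin_div_sub_le (N : ℕ) :
    |∑ j ∈ range (N + 1), sin (j / N) - N * (1 - cos 1)| ≤ 1 := by
  have hmono : MonotoneOn sin (Set.Icc 0 1) :=
    strictMonoOn_sin.monotoneOn.mono <| Set.Icc_subset_Icc (by linarith [pi_pos])
      (by linarith [pi_gt_three])
  have h := hmono.sum_range_succ_div_sub_integral_mem_Icc N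
  rw [integral_sin, cos_zero, sin_zero] at h
  exact abs_le.2 ⟨by linarith [h.1], h.2.trans (sin_le_one 1)⟩

theorem abs_sqrt_sq_add_sub_sub_div_le {m x : ℝ} (hm : 0 < m) (hx₀ : 0 ≤ x)
    (hx : x ≤ 2 * m + 1) : |√(m ^ 2 + x) - m - x / (2 * m)| ≤ 1 / (2 * m) := by
  set s := √(m ^ 2 + x)
  have hs : s ^ 2 = m ^ 2 + x := sq_sqrt (by positivity)
  have hms : m ≤ s := le_sqrt_of_sq_le (by linarith)
  have hsm : s ≤ m + 1 := sqrt_le_iff.2 ⟨by linarith, by linarith⟩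
  have hgap : s - m - x / (2 * m) = -((s - m) ^ 2 / (2 * m)) := by
    field_simp
    linear_combination hs
  rw [hgap, abs_neg, abs_of_nonneg (by positivity)]
  gcongr
  nlinarith

theorem Int.fract_sqrt_natCast (k : ℕ) : Int.fract √(k : ℝ) = √k - Nat.sqrt k := by
  rw [Int.fract, floor_real_sqrt_eq_nat_sqrt, Int.cast_natCast]

theorem one_sub_cos_one_mem_Icc : 1 - cos 1 ∈ Set.Icc (0 : ℝ) 1 :=
  ⟨sub_nonneg.2 (cos_le_one 1), by linarith [cos_one_pos]⟩

theorem abs_sum_Ico_sq_sin_fract_sqrt_sub_le (m : ℕ) :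
    |∑ k ∈ Ico (m ^ 2) ((m + 1) ^ 2), (sin (Int.fract √(k : ℝ)) - (1 - cos 1))| ≤ 4 := by
  have hc := one_sub_cos_one_mem_Icc
  rcases m.eq_zero_or_pos with rfl | hm
  · simp only [zero_pow two_ne_zero, zero_add, one_pow, Nat.Ico_zero_eq_range, sum_range_one,
      Nat.cast_zero, sqrt_zero, Int.fract_zero, sin_zero, zero_sub, abs_neg]
    rw [abs_of_nonneg hc.1]
    linarith [hc.2]
  have hm' : (0 : ℝ) < m := by exact_mod_cast hm
  have hterm : ∀ j ∈ range (2 * m + 1),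
      |sin (Int.fract √((m ^ 2 + j : ℕ) : ℝ)) - sin (j / (2 * m : ℕ))| ≤ 1 / (2 * m) := by
    intro j hj
    have hj : j ≤ 2 * m := Nat.lt_succ_iff.1 (mem_range.1 hj)
    rw [Int.fract_sqrt_natCast, Nat.sqrt_add_eq' m (by omega)]
    refine (abs_sin_sub_sin_le _ _).trans ?_
    push_cast
    exact abs_sqrt_sq_add_sub_sub_div_le hm' (by positivity) (by exact_mod_cast hj.trans (by omega))
  have herr : |∑ j ∈ range (2 * m + 1),
      (sin (Int.fract √((m ^ 2 + j : ℕ) : ℝ)) - sin (j / (2 * m : ℕ)))| ≤ 2 := by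
    refine (abs_sum_le_sum_abs _ _).trans <| (sum_le_card_nsmul _ _ _ hterm).trans ?_
    rw [card_range, nsmul_eq_mul, mul_one_div, div_le_iff₀ (by positivity)]
    push_cast
    linarith [show (1 : ℝ) ≤ m by exact_mod_cast hm]
  have hriemann := abs_sum_range_succ_sin_div_sub_le (2 * m)
  have hlen : (m + 1) ^ 2 - m ^ 2 = 2 * m + 1 := by
    rw [add_sq]; omega
  rw [sum_sub_distrib] at herr
  rw [sum_Ico_eq_sum_range, hlen, sum_sub_distrib, sum_const, card_range, nsmul_eq_mul]
  rw [abs_le] at herr hriemann ⊢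
  push_cast at herr hriemann ⊢
  constructor <;> linarith [hc.1, hc.2, herr.1, herr.2, hriemann.1, hriemann.2]

theorem abs_sum_Icc_sin_fract_sqrt_sub_le (n : ℕ) :
    |∑ k ∈ Icc 1 n, sin (Int.fract √(k : ℝ)) - n * (1 - cos 1)| ≤ 8 * √n + 9 := by
  have hc := one_sub_cos_one_mem_Icc
  have hg : ∀ k : ℕ, ‖sin (Int.fract √(k : ℝ)) - (1 - cos 1)‖ ≤ 2 := fun k ↦ by
    rw [norm_eq_abs, abs_le]
    constructor <;> linarith [neg_one_le_sin (Int.fract √(k : ℝ)), sin_le_one (Int.fract √(k : ℝ)),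
      hc.1, hc.2]
  have hsum := norm_sum_range_le_of_norm_sum_Ico_sq_le hg
    (fun m ↦ (norm_eq_abs _).trans_le (abs_sum_Ico_sq_sin_fract_sqrt_sub_le m)) (n + 1)
  -- the term `k = 0` vanishes, so the sum over `Icc 1 n` is the sum over `range (n + 1)`
  have hshift : ∑ k ∈ Icc 1 n, sin (Int.fract √(k : ℝ)) - n * (1 - cos 1) =
      ∑ k ∈ range (n + 1), (sin (Int.fract √(k : ℝ)) - (1 - cos 1)) + (1 - cos 1) := by
    rw [sum_sub_distrib, sum_const, card_range, nsmul_eq_mul, range_eq_Ico,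
      sum_eq_sum_Ico_succ_bot n.succ_pos, zero_add, Nat.succ_eq_add_one,
      Ico_add_one_right_eq_Icc]
    simp only [Nat.cast_zero, sqrt_zero, Int.fract_zero, sin_zero, zero_add, Nat.cast_add,
      Nat.cast_one]
    ring
  have hsqrt : (Nat.sqrt (n + 1) : ℝ) ≤ √n + 1 := by
    refine (Nat.cast_le.2 (Nat.sqrt_succ_le_succ_sqrt n)).trans ?_
    push_cast
    linarith [nat_sqrt_le_real_sqrt (a := n)]
  rw [hshift]
  refine (abs_add_le _ _).trans ?_
  rw [← norm_eq_abs, abs_of_nonneg hc.1]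
  linarith [hc.2]

theorem tendsto_one_div_mul_of_abs_sub_mul_le {S : ℕ → ℝ} {c K L : ℝ}
    (h : ∀ n : ℕ, |S n - n * c| ≤ K * √n + L) :
    Tendsto (fun n : ℕ ↦ (1 / (n : ℝ)) * S n) atTop (𝓝 c) := by
  rw [← tendsto_sub_nhds_zero_iff]
  have hlim : Tendsto (fun n : ℕ ↦ K / √n + L / n) atTop (𝓝 0) := by
    simpa using (tendsto_const_nhds.div_atTop
      (tendsto_sqrt_atTop.comp tendsto_natCast_atTop_atTop)).add
      (tendsto_const_nhds.div_atTop tendsto_natCast_atTop_atTop)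
  refine squeeze_zero_norm' ?_ hlim
  filter_upwards [eventually_gt_atTop 0] with n hn
  have hn' : (0 : ℝ) < n := by exact_mod_cast hn
  have hsq : √n * √n = n := mul_self_sqrt hn'.le
  have hdiv : 1 / (n : ℝ) * S n - c = (S n - n * c) / n := by field_simp
  calc ‖1 / (n : ℝ) * S n - c‖ = |S n - n * c| / n := by
        rw [norm_eq_abs, hdiv, abs_div, abs_of_pos hn']
    _ ≤ (K * √n + L) / n := by gcongr; exact h n
    _ = K / √n + L / n := by
        field_simp
        linear_combination K * hsq

/-- `lim_{n→∞} (1/n) Σ_{k=1}^n sin({√k}) = 1 − cos 1`. -/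
theorem tendsto_average_sin_fract_sqrt :
    Tendsto
      (fun n : ℕ => (1 / (n : ℝ)) * ∑ k ∈ Finset.Icc 1 n, Real.sin (Int.fract (Real.sqrt k)))
      atTop (𝓝 (1 - Real.cos 1)) :=
  tendsto_one_div_mul_of_abs_sub_mul_le abs_sum_Icc_sin_fract_sqrt_sub_le
end

section
/- The asymptotic proportion of terms of the sequence u_k = sin(2π{√k}) falling in [−1/2, 1/2] is 1/3; that is, (1/n)·#{k ∈ ℕ : 1 ≤ k ≤ n and −1/2 ≤ sin(2π{√k}) ≤ 1/2} tends to 1/3 as n → ∞. -/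
/-!
On the block `m² ≤ k < (m + 1)²` we have `{√k} = √k - m`, so `{√k} ∈ [a, b]` exactly when
`(m + a)² ≤ k ≤ (m + b)²`: each block contributes `(b - a)(2m + 1) + O(1)` such `k`, and summing
over the `√n` blocks below `n` gives `(b - a) n + O(√n)`. Since `|sin (2πf)| ≤ 1/2` for `f ∈ [0, 1)`
exactly when `f ∈ [0, 1/12] ∪ [5/12, 7/12] ∪ [11/12, 1]`, the proportion is `1/12 + 1/6 + 1/12`.
-/

open Filter Topology Real Finset

lemma card_filter_or_of_disjoint {α : Type*} [DecidableEq α] (s : Finset α) {p q : α → Prop}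
    [DecidablePred p] [DecidablePred q] (h : ∀ x ∈ s, p x → ¬q x) :
    #{x ∈ s | p x ∨ q x} = #{x ∈ s | p x} + #{x ∈ s | q x} := by
  rw [filter_or, card_union_of_disjoint (disjoint_filter.2 h)]

lemma tendsto_div_of_abs_sub_mul_le {x : ℕ → ℝ} {r A B : ℝ}
    (h : ∀ n : ℕ, |x n - r * n| ≤ A * √n + B) :
    Tendsto (fun n : ℕ => x n / n) atTop (𝓝 r) := by
  rw [← tendsto_sub_nhds_zero_iff]
  have hinv : Tendsto (fun n : ℕ => (n : ℝ)⁻¹) atTop (𝓝 0) := tendsto_inv_atTop_nhds_zero_nat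
  have hsqrt : Tendsto (fun n : ℕ => (√n)⁻¹) atTop (𝓝 0) :=
    tendsto_inv_atTop_zero.comp (tendsto_sqrt_atTop.comp tendsto_natCast_atTop_atTop)
  refine squeeze_zero_norm' ?_ (by simpa using (hsqrt.const_mul A).add (hinv.const_mul B))
  filter_upwards [eventually_gt_atTop 0] with n hn
  have hn' : (0 : ℝ) < n := by exact_mod_cast hn
  have hsq : √(n : ℝ) * √n = n := mul_self_sqrt hn'.le
  calc ‖x n / n - r‖ = |x n - r * n| / n := by
        rw [norm_eq_abs, ← abs_of_pos hn', ← abs_div, abs_of_pos hn', sub_div,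
          mul_div_cancel_right₀ _ hn'.ne']
    _ ≤ (A * √n + B) / n := by gcongr; exact h n
    _ = A * (√n)⁻¹ + B * (n : ℝ)⁻¹ := by
        have := (sqrt_pos.2 hn').ne'
        field_simp
        linear_combination A * hsq

section
variable (p : ℕ → Prop) [DecidablePred p]

lemma abs_card_filter_range_sq_sub_le {r C : ℝ}
    (hblock : ∀ m : ℕ, |(#{k ∈ Ico (m ^ 2) ((m + 1) ^ 2) | p k} : ℝ) - r * (2 * m + 1)| ≤ C)
    (M : ℕ) : |(#{k ∈ range (M ^ 2) | p k} : ℝ) - r * M ^ 2| ≤ C * M := by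
  induction M with
  | zero => simp
  | succ M ih =>
    have hsplit : range ((M + 1) ^ 2) = range (M ^ 2) ∪ Ico (M ^ 2) ((M + 1) ^ 2) := by
      rw [range_eq_Ico, range_eq_Ico, Ico_union_Ico_eq_Ico (Nat.zero_le _) (by gcongr; omega)]
    rw [hsplit, filter_union, card_union_of_disjoint
      (disjoint_filter_filter (by rw [range_eq_Ico]; exact Ico_disjoint_Ico_consecutive _ _ _))]
    push_cast
    calc _ = |((#{k ∈ range (M ^ 2) | p k} : ℝ) - r * M ^ 2) +
          ((#{k ∈ Ico (M ^ 2) ((M + 1) ^ 2) | p k} : ℝ) - r * (2 * M + 1))| := by ring_nf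
      _ ≤ C * M + C := (abs_add_le _ _).trans (add_le_add ih (hblock M))
      _ = C * (M + 1) := by ring

lemma card_filter_Icc_le_card_filter_range_add (N n : ℕ) :
    #{k ∈ Icc 1 n | p k} ≤ #{k ∈ range N | p k} + (n + 1 - N) := by
  calc #{k ∈ Icc 1 n | p k} ≤ #{k ∈ range N ∪ Ico N (n + 1) | p k} := by
        refine card_le_card (filter_subset_filter _ fun k hk => ?_)
        simp only [mem_Icc, mem_union, mem_range, mem_Ico] at hk ⊢
        omega
    _ ≤ #{k ∈ range N | p k} + #(Ico N (n + 1)) := by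
        rw [filter_union]
        exact (card_union_le _ _).trans (by gcongr; exact filter_subset p _)
    _ = #{k ∈ range N | p k} + (n + 1 - N) := by rw [Nat.card_Ico]

lemma card_filter_range_le_card_filter_Icc_add_one {N n : ℕ} (h : N ≤ n + 1) :
    #{k ∈ range N | p k} ≤ #{k ∈ Icc 1 n | p k} + 1 := by
  calc #{k ∈ range N | p k} ≤ #(insert 0 {k ∈ Icc 1 n | p k}) := by
        refine card_le_card fun k hk => ?_
        rw [mem_filter, mem_range] at hk
        rw [mem_insert, mem_filter, mem_Icc]
        rcases Nat.eq_zero_or_pos k with rfl | hk0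
        · exact Or.inl rfl
        · exact Or.inr ⟨⟨hk0, by omega⟩, hk.2⟩
    _ ≤ #{k ∈ Icc 1 n | p k} + 1 := card_insert_le _ _

lemma abs_card_filter_Icc_sub_le {r C : ℝ} (hr0 : 0 ≤ r) (hr1 : r ≤ 1)
    (hblock : ∀ m : ℕ, |(#{k ∈ Ico (m ^ 2) ((m + 1) ^ 2) | p k} : ℝ) - r * (2 * m + 1)| ≤ C)
    (n : ℕ) : |(#{k ∈ Icc 1 n | p k} : ℝ) - r * n| ≤ (C + 2) * √n + 1 := by
  set s := Nat.sqrt n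
  have hs_le : s ^ 2 ≤ n := Nat.sqrt_le' n
  have hn_le : n ≤ s ^ 2 + 2 * s := by linarith [Nat.lt_succ_sqrt' n]
  have hupper : (#{k ∈ Icc 1 n | p k} : ℝ) ≤ #{k ∈ range (s ^ 2) | p k} + (n - s ^ 2) + 1 := by
    have := card_filter_Icc_le_card_filter_range_add p (s ^ 2) n
    rw [Nat.sub_add_comm hs_le, ← add_assoc] at this
    rw [← Nat.cast_pow, ← Nat.cast_sub hs_le]
    exact_mod_cast this
  have hlower : (#{k ∈ range (s ^ 2) | p k} : ℝ) ≤ #{k ∈ Icc 1 n | p k} + 1 := by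
    exact_mod_cast card_filter_range_le_card_filter_Icc_add_one p (hs_le.trans n.le_succ)
  have hrange := abs_card_filter_range_sq_sub_le p hblock s
  have hC : 0 ≤ C := (abs_nonneg _).trans (hblock 0)
  have hs : (s : ℝ) ≤ √n := nat_sqrt_le_real_sqrt
  have htail0 : 0 ≤ (n : ℝ) - s ^ 2 := by rw [sub_nonneg]; exact_mod_cast hs_le
  have htail : (n : ℝ) - s ^ 2 ≤ 2 * s := by rw [sub_le_iff_le_add']; exact_mod_cast hn_le
  rw [abs_le] at hrange ⊢
  constructor
  · nlinarith [mul_nonneg hr0 htail0]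
  · nlinarith [mul_nonneg (sub_nonneg.2 hr1) htail0]

end

lemma abs_card_Icc_ceil_floor_sub_le {x y : ℝ} (hx : 0 ≤ x) (hxy : x ≤ y) :
    |(#(Icc ⌈x⌉₊ ⌊y⌋₊) : ℝ) - (y - x)| ≤ 1 := by
  have hy : 0 ≤ y := hx.trans hxy
  have hfl := Nat.floor_le hy
  have hfl' := Nat.lt_floor_add_one y
  have hce := Nat.le_ceil x
  have hce' := Nat.ceil_lt_add_one hx
  have hle : ⌈x⌉₊ ≤ ⌊y⌋₊ + 1 := by
    have : ⌈x⌉₊ < ⌊y⌋₊ + 2 := by exact_mod_cast (show (⌈x⌉₊ : ℝ) < ⌊y⌋₊ + 2 by linarith)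
    omega
  rw [Nat.card_Icc, Nat.cast_sub hle, abs_le]
  push_cast
  constructor <;> linarith

lemma fract_sqrt_eq_of_mem_Ico {m k : ℕ} (hk : k ∈ Ico (m ^ 2) ((m + 1) ^ 2)) :
    Int.fract √(k : ℕ) = √k - m := by
  rw [Int.fract, floor_real_sqrt_eq_nat_sqrt, ← Nat.eq_sqrt'.2 (mem_Ico.1 hk)]
  rfl

section
variable {a b : ℝ}

lemma fract_sqrt_mem_Icc_iff {m k : ℕ} (hk : k ∈ Ico (m ^ 2) ((m + 1) ^ 2)) (ha : 0 ≤ a)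
    (hab : a ≤ b) :
    Int.fract √(k : ℕ) ∈ Set.Icc a b ↔ (m + a) ^ 2 ≤ k ∧ (k : ℝ) ≤ (m + b) ^ 2 := by
  have hmb : 0 ≤ (m : ℝ) + b := add_nonneg m.cast_nonneg (ha.trans hab)
  rw [fract_sqrt_eq_of_mem_Ico hk, Set.mem_Icc, le_sub_iff_add_le', sub_le_iff_le_add',
    le_sqrt (by positivity) k.cast_nonneg, sqrt_le_left hmb]

/-- The erased point matters only for `b = 1`, where `(m + 1)²` lies in the next block. -/
lemma filter_fract_sqrt_mem_Icc_Ico_sq (m : ℕ) (ha : 0 ≤ a) (hab : a ≤ b) (hb : b ≤ 1) :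
    {k ∈ Ico (m ^ 2) ((m + 1) ^ 2) | Int.fract √(k : ℕ) ∈ Set.Icc a b} =
      (Icc ⌈((m + a) ^ 2 : ℝ)⌉₊ ⌊((m + b) ^ 2 : ℝ)⌋₊).erase ((m + 1) ^ 2) := by
  ext k
  rw [mem_filter, mem_erase, mem_Icc, Nat.ceil_le, Nat.le_floor_iff (by positivity)]
  constructor
  · rintro ⟨hk, hfr⟩
    exact ⟨(mem_Ico.1 hk).2.ne, (fract_sqrt_mem_Icc_iff hk ha hab).1 hfr⟩
  · rintro ⟨hne, hlo, hhi⟩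
    have hk : k ∈ Ico (m ^ 2) ((m + 1) ^ 2) := by
      refine mem_Ico.2 ⟨?_, lt_of_le_of_ne ?_ hne⟩ <;> rw [← Nat.cast_le (α := ℝ)] <;> push_cast
      · exact le_trans (by gcongr; linarith) hlo
      · exact hhi.trans (by gcongr; exact add_nonneg m.cast_nonneg (ha.trans hab))
    exact ⟨hk, (fract_sqrt_mem_Icc_iff hk ha hab).2 ⟨hlo, hhi⟩⟩

lemma abs_card_filter_fract_sqrt_mem_Icc_Ico_sq_sub_le (m : ℕ) (ha : 0 ≤ a) (hab : a ≤ b)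
    (hb : b ≤ 1) :
    |(#{k ∈ Ico (m ^ 2) ((m + 1) ^ 2) | Int.fract √(k : ℕ) ∈ Set.Icc a b} : ℝ) -
      (b - a) * (2 * m + 1)| ≤ 3 := by
  rw [filter_fract_sqrt_mem_Icc_Ico_sq m ha hab hb]
  set s := Icc ⌈((m + a) ^ 2 : ℝ)⌉₊ ⌊((m + b) ^ 2 : ℝ)⌋₊
  have hs := abs_card_Icc_ceil_floor_sub_le (x := (m + a) ^ 2) (y := (m + b) ^ 2)
    (by positivity) (by gcongr)
  have herase : (#s : ℝ) ≤ #(s.erase ((m + 1) ^ 2)) + 1 := by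
    have := pred_card_le_card_erase (s := s) (a := (m + 1) ^ 2)
    exact_mod_cast (by omega : #s ≤ #(s.erase ((m + 1) ^ 2)) + 1)
  have herase' : (#(s.erase ((m + 1) ^ 2)) : ℝ) ≤ #s := by exact_mod_cast card_erase_le
  have hquad : |(m + b) ^ 2 - (m + a) ^ 2 - (b - a) * (2 * m + 1)| ≤ 1 := by
    rw [abs_le]; constructor <;> nlinarith
  rw [abs_le] at hs hquad ⊢
  constructor <;> linarith [hs.1, hs.2, hquad.1, hquad.2]

end

theorem tendsto_card_fract_sqrt_mem_Icc_div {a b : ℝ} (ha : 0 ≤ a) (hab : a ≤ b) (hb : b ≤ 1) :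
    Tendsto (fun n : ℕ => (#{k ∈ Icc 1 n | Int.fract √(k : ℕ) ∈ Set.Icc a b} : ℝ) / n)
      atTop (𝓝 (b - a)) :=
  tendsto_div_of_abs_sub_mul_le <| abs_card_filter_Icc_sub_le _ (sub_nonneg.2 hab) (by linarith)
    (abs_card_filter_fract_sqrt_mem_Icc_Ico_sq_sub_le · ha hab hb)

lemma abs_sin_pi_mul_le_half_iff {t : ℝ} (ht : |t| ≤ 1 / 2) :
    |sin (π * t)| ≤ 1 / 2 ↔ |t| ≤ 1 / 6 := by
  have hπ := pi_pos
  have hmem {s : ℝ} (hs : |s| ≤ 1 / 2) : π * |s| ∈ Set.Icc (-(π / 2)) (π / 2) :=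
    ⟨by nlinarith [abs_nonneg s], by nlinarith⟩
  have h6 : |(1 / 6 : ℝ)| = 1 / 6 := abs_of_pos (by norm_num)
  have habs : |π * t| = π * |t| := by rw [abs_mul, abs_of_pos hπ]
  rw [abs_sin_eq_sin_abs_of_abs_le_pi (by rw [habs]; nlinarith), habs, ← sin_pi_div_six,
    show π / 6 = π * |1 / 6| by rw [h6]; ring,
    strictMonoOn_sin.le_iff_le (hmem ht) (hmem (by rw [h6]; norm_num)),
    mul_le_mul_iff_right₀ hπ, h6]

lemma abs_sin_two_pi_mul_le_half_iff {f : ℝ} (h0 : 0 ≤ f) (h1 : f < 1) :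
    |sin (2 * π * f)| ≤ 1 / 2 ↔
      f ∈ Set.Icc 0 (1 / 12) ∨ f ∈ Set.Icc (5 / 12) (7 / 12) ∨ f ∈ Set.Icc (11 / 12) 1 := by
  have shift (j : ℕ) (hj : |2 * f - j| ≤ 1 / 2) :
      |sin (2 * π * f)| ≤ 1 / 2 ↔ |2 * f - j| ≤ 1 / 6 := by
    rw [← abs_sin_pi_mul_le_half_iff hj, mul_sub, ← mul_assoc, mul_comm π 2, mul_comm π,
      sin_sub_nat_mul_pi, abs_mul, abs_pow, abs_neg, abs_one, one_pow, one_mul]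
  simp only [Set.mem_Icc]
  rcases le_or_gt f (1 / 4) with hf | hf
  · rw [shift 0 (by rw [abs_le]; push_cast; constructor <;> linarith), abs_le]
    push_cast; grind
  rcases le_or_gt f (3 / 4) with hf' | hf'
  · rw [shift 1 (by rw [abs_le]; push_cast; constructor <;> linarith), abs_le]
    push_cast; grind
  · rw [shift 2 (by rw [abs_le]; push_cast; constructor <;> linarith), abs_le]
    push_cast; grind

lemma card_filter_abs_sin_two_pi_fract_sqrt_le_half (n : ℕ) :
    #{k ∈ Icc 1 n | |sin (2 * π * Int.fract √(k : ℕ))| ≤ 1 / 2} =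
      #{k ∈ Icc 1 n | Int.fract √(k : ℕ) ∈ Set.Icc 0 (1 / 12)} +
        (#{k ∈ Icc 1 n | Int.fract √(k : ℕ) ∈ Set.Icc (5 / 12) (7 / 12)} +
          #{k ∈ Icc 1 n | Int.fract √(k : ℕ) ∈ Set.Icc (11 / 12) 1}) := by
  rw [filter_congr fun k _ => abs_sin_two_pi_mul_le_half_iff (Int.fract_nonneg _)
    (Int.fract_lt_one _), card_filter_or_of_disjoint, card_filter_or_of_disjoint]
  · exact fun k _ h₂ h₃ => by linarith [h₂.2, h₃.1]
  · exact fun k _ h₁ h₂₃ => by rcases h₂₃ with h | h <;> linarith [h₁.2, h.1]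

/-- The asymptotic proportion of `k ≤ n` with `sin(2π{√k}) ∈ [−1/2, 1/2]` is `1/3`. -/
theorem proportion_sin_two_pi_fract_sqrt_in_Icc :
    Tendsto
      (fun n : ℕ =>
        (((Finset.Icc 1 n).filter fun k : ℕ =>
            -(1 / 2 : ℝ) ≤ Real.sin (2 * π * Int.fract (Real.sqrt k)) ∧
            Real.sin (2 * π * Int.fract (Real.sqrt k)) ≤ 1 / 2).card : ℝ) / n)
      atTop (𝓝 (1 / 3)) := by
  have h₁ := tendsto_card_fract_sqrt_mem_Icc_div (a := 0) (b := 1 / 12) le_rfl (by norm_num)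
    (by norm_num)
  have h₂ := tendsto_card_fract_sqrt_mem_Icc_div (a := 5 / 12) (b := 7 / 12) (by norm_num)
    (by norm_num) (by norm_num)
  have h₃ := tendsto_card_fract_sqrt_mem_Icc_div (a := 11 / 12) (b := 1) (by norm_num)
    (by norm_num) le_rfl
  simp only [← abs_le, card_filter_abs_sin_two_pi_fract_sqrt_le_half, Nat.cast_add, add_div]
  convert h₁.add (h₂.add h₃) using 2
  norm_num
end

section
/- For every t ∈ [0,1], the Lebesgue measure of the set {x ∈ (0,1] : {1/x} ≤ t} equals the sum of the convergent series Σ_{m=1}^∞ (1/m − 1/(m+t)). -/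
/-!
Writing `y = 1 / x`, the condition says that `y ∈ [n, n + t]` for some integer `n ≥ 1`, i.e. that
`x ∈ [1 / (n + t), 1 / n]`. For `t ≤ 1` these intervals meet at most in endpoints, so the measure
of their union is the sum of their lengths `1 / n - 1 / (n + t)`.
-/

open MeasureTheory Set

theorem volume_iUnion_Icc_of_le {a b : ℕ → ℝ} (h : ∀ ⦃i j⦄, i < j → b j ≤ a i) :
    volume (⋃ n, Icc (a n) (b n)) = ∑' n, ENNReal.ofReal (b n - a n) := by
  refine (measure_iUnion₀ (Pairwise.of_lt fun i j hij ↦ ?_)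
    fun _ ↦ measurableSet_Icc.nullMeasurableSet).trans (by simp only [Real.volume_Icc])
  change volume (Icc (a i) (b i) ∩ Icc (a j) (b j)) = 0
  rw [Icc_inter_Icc, Real.volume_Icc, ENNReal.ofReal_eq_zero, sub_nonpos]
  exact (min_le_right _ _).trans ((h hij).trans (le_max_left _ _))

theorem fract_le_and_one_le_iff {y t : ℝ} :
    Int.fract y ≤ t ∧ 1 ≤ y ↔ ∃ m : ℕ, y ∈ Icc ((m : ℝ) + 1) (m + 1 + t) := by
  constructor
  · rintro ⟨hfract, hy⟩
    have hy1 : (1 : ℤ) ≤ ⌊y⌋ := Int.le_floor.2 (by exact_mod_cast hy)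
    obtain ⟨m, hm⟩ : ∃ m : ℕ, ⌊y⌋ = m + 1 := ⟨(⌊y⌋ - 1).toNat, by omega⟩
    have hfloor : (⌊y⌋ : ℝ) = m + 1 := by exact_mod_cast hm
    refine ⟨m, hfloor ▸ Int.floor_le y, ?_⟩
    rw [Int.fract, hfloor] at hfract
    linarith
  · rintro ⟨m, hlo, hhi⟩
    have hfloor : ((m + 1 : ℤ) : ℝ) ≤ ⌊y⌋ := by
      exact_mod_cast Int.le_floor.2 (by exact_mod_cast hlo)
    push_cast at hfloor
    refine ⟨?_, by linarith [m.cast_nonneg (α := ℝ)]⟩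
    rw [Int.fract]
    linarith

theorem setOf_fract_inv_le_eq_iUnion {t : ℝ} (ht : 0 ≤ t) :
    {x : ℝ | x ∈ Ioc 0 1 ∧ Int.fract (1 / x) ≤ t} =
      ⋃ m : ℕ, Icc (1 / ((m : ℝ) + 1 + t)) (1 / ((m : ℝ) + 1)) := by
  ext x
  simp only [mem_ofPred_eq, mem_iUnion, mem_Icc, mem_Ioc]
  have hpos (m : ℕ) : 0 < (m : ℝ) + 1 + t := by positivity
  constructor
  · rintro ⟨⟨hx0, hx1⟩, hfract⟩
    obtain ⟨m, hlo, hhi⟩ := fract_le_and_one_le_iff.1 ⟨hfract, one_le_one_div hx0 hx1⟩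
    exact ⟨m, (one_div_le (hpos m) hx0).2 hhi, (le_one_div hx0 (by positivity)).2 hlo⟩
  · rintro ⟨m, hlo, hhi⟩
    have hx0 : 0 < x := lt_of_lt_of_le (one_div_pos.2 (hpos m)) hlo
    obtain ⟨hfract, hx1⟩ := fract_le_and_one_le_iff.2
      ⟨m, (le_one_div hx0 (by positivity)).1 hhi, (one_div_le (hpos m) hx0).1 hlo⟩
    exact ⟨⟨hx0, (one_le_div hx0).1 hx1⟩, hfract⟩

theorem one_div_sub_one_div_add_nonneg {t : ℝ} (ht : 0 ≤ t) (m : ℕ) :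
    0 ≤ 1 / ((m : ℝ) + 1) - 1 / ((m : ℝ) + 1 + t) :=
  sub_nonneg.2 (one_div_le_one_div_of_le (by positivity) (by linarith))

theorem summable_one_div_sub_one_div_add {t : ℝ} (ht : 0 ≤ t) :
    Summable fun m : ℕ ↦ 1 / ((m : ℝ) + 1) - 1 / ((m : ℝ) + 1 + t) := by
  have hsq : Summable fun m : ℕ ↦ t * (1 / ((m : ℝ) + 1) ^ 2) := by
    refine Summable.mul_left t ?_
    simpa using (summable_nat_add_iff 1).2 (Real.summable_one_div_nat_pow.2 one_lt_two)
  refine hsq.of_nonneg_of_le (one_div_sub_one_div_add_nonneg ht) fun m ↦ ?_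
  have hm : (0 : ℝ) < m + 1 := by positivity
  rw [div_sub_div _ _ hm.ne' (by positivity), mul_one_div]
  gcongr
  · linarith
  · nlinarith

/-- For `t ∈ [0,1]`, the Lebesgue measure of `{x ∈ (0,1] : {1/x} ≤ t}` equals
`Σ_{m=1}^∞ (1/m − 1/(m+t))`. -/
theorem volume_fract_inv_le (t : ℝ) (ht : t ∈ Set.Icc (0 : ℝ) 1) :
    volume {x : ℝ | x ∈ Set.Ioc (0 : ℝ) 1 ∧ Int.fract (1 / x) ≤ t}
      = ENNReal.ofReal (∑' m : ℕ, (1 / (m + 1 : ℝ) - 1 / ((m + 1 : ℝ) + t))) := by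
  obtain ⟨ht0, ht1⟩ := ht
  rw [setOf_fract_inv_le_eq_iUnion ht0, ENNReal.ofReal_tsum_of_nonneg
    (one_div_sub_one_div_add_nonneg ht0) (summable_one_div_sub_one_div_add ht0)]
  refine volume_iUnion_Icc_of_le fun i j hij ↦ one_div_le_one_div_of_le (by positivity) ?_
  have : (i : ℝ) + 1 ≤ j := by exact_mod_cast hij
  linarith
end

section
/- For every t ∈ [0,1], the asymptotic proportion of elements {n/i} (1 ≤ i ≤ n) falling in [0, t] satisfies lim_{n→∞} (1/n)·#{i ∈ ℕ : 1 ≤ i ≤ n and {n/i} ≤ t} = Σ_{m=1}^∞ (1/m − 1/(m+t)). -/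
/-!
Group the indices `i` by `m = ⌊n/i⌋`. For `m ≥ 1`, the indices with `⌊n/i⌋ = m` and
`{n/i} ≤ t` contain the integers of `(n/(m+t), n/m]` and lie in `[n/(m+t), n/m]`, so there are
`n (1/m - 1/(m+t))` of them up to an error of one, while at most `n/(M+1)` indices have
`⌊n/i⌋ > M`. The count thus differs from `n S_M`, with `S_M` the `M`-th partial sum of the
series, by at most `M + n/(M+1)`; divide by `n` and let first `n`, then `M` tend to infinity.
-/

open Filter Topology Finset

theorem tendsto_of_forall_eventually_dist_lt {α ι E : Type*} [PseudoMetricSpace E]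
    {l : Filter α} {p : Filter ι} [p.NeBot] {u : α → E} {s : ι → E} {ε : ι → ℝ}
    {S : E} (hs : Tendsto s p (𝓝 S)) (hε : Tendsto ε p (𝓝 0))
    (h : ∀ M, ∀ δ > 0, ∀ᶠ n in l, dist (u n) (s M) < ε M + δ) :
    Tendsto u l (𝓝 S) := by
  refine Metric.tendsto_nhds.2 fun r hr => ?_
  obtain ⟨M, hsM, hεM⟩ :=
    ((Metric.tendsto_nhds.1 hs (r / 3) (by positivity)).and
      (hε.eventually (gt_mem_nhds (by positivity : (0 : ℝ) < r / 3)))).exists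
  filter_upwards [h M (r / 3) (by positivity)] with n hn
  linarith [dist_triangle (u n) (s M) S]

theorem summable_one_div_add_one_sub_one_div_add {t : ℝ} (ht : 0 ≤ t) :
    Summable fun k : ℕ => 1 / (k + 1 : ℝ) - 1 / ((k + 1 : ℝ) + t) := by
  have hsq : Summable fun k : ℕ => t / ((k : ℝ) + 1) ^ 2 := by
    simpa [div_eq_mul_one_div t] using
      ((summable_nat_add_iff 1).2 (Real.summable_one_div_nat_pow.2 one_lt_two)).mul_left t
  refine Summable.of_nonneg_of_le (fun k => ?_) (fun k => ?_) hsq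
  · rw [sub_nonneg]
    exact one_div_le_one_div_of_le (by positivity) (by linarith)
  · have hk : (0 : ℝ) < k + 1 := by positivity
    rw [div_sub_div _ _ hk.ne' (by positivity), one_mul, mul_one, add_sub_cancel_left, sq]
    exact div_le_div_of_nonneg_left ht (by positivity) (by nlinarith)

theorem tendsto_sum_Icc_one_div_sub_one_div_add {t : ℝ} (ht : 0 ≤ t) :
    Tendsto (fun M : ℕ => ∑ m ∈ Icc 1 M, (1 / (m : ℝ) - 1 / (m + t))) atTop
      (𝓝 (∑' k : ℕ, (1 / (k + 1 : ℝ) - 1 / ((k + 1 : ℝ) + t)))) := by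
  refine (summable_one_div_add_one_sub_one_div_add ht).hasSum.tendsto_sum_nat.congr fun M => ?_
  rw [range_eq_Ico, ← Ico_add_one_right_eq_Icc]
  simpa using sum_Ico_add' (fun m : ℕ => 1 / (m : ℝ) - 1 / (m + t)) 0 M 1

theorem card_Icc_ceil_floor_le {a b : ℝ} (hb : 0 ≤ b) (hab : a ≤ b) :
    (#(Icc ⌈a⌉₊ ⌊b⌋₊) : ℝ) ≤ b - a + 1 := by
  rw [Nat.card_Icc]
  rcases le_total ⌈a⌉₊ (⌊b⌋₊ + 1) with h | h
  · rw [Nat.cast_sub h]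
    push_cast
    linarith [Nat.le_ceil a, Nat.floor_le hb]
  · rw [Nat.sub_eq_zero_of_le h]
    simp only [CharP.cast_eq_zero]
    linarith

theorem sub_sub_one_le_card_Ioc_floor {a b : ℝ} (ha : 0 ≤ a) :
    b - a - 1 ≤ (#(Ioc ⌊a⌋₊ ⌊b⌋₊) : ℝ) := by
  rw [Nat.card_Ioc]
  calc b - a - 1 ≤ (⌊b⌋₊ : ℝ) - ⌊a⌋₊ := by
        linarith [Nat.lt_floor_add_one b, Nat.floor_le ha]
    _ ≤ _ := by
      have : ⌊b⌋₊ ≤ ⌊b⌋₊ - ⌊a⌋₊ + ⌊a⌋₊ := by omega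
      rw [sub_le_iff_le_add]
      exact_mod_cast this

theorem Int.fract_eq_sub_natFloor {x : ℝ} (hx : 0 ≤ x) : Int.fract x = x - ⌊x⌋₊ := by
  rw [← Int.self_sub_floor, ← Int.natCast_floor_eq_floor hx, Int.cast_natCast]

noncomputable def fractDivLe (t : ℝ) (n : ℕ) : Finset ℕ :=
  {i ∈ Icc 1 n | Int.fract ((n : ℝ) / i) ≤ t}

section Blocks

variable {t : ℝ} {n m : ℕ}

theorem filter_div_eq_subset_Icc (ht : 0 ≤ t) (hm : 0 < m) :
    {i ∈ fractDivLe t n | n / i = m} ⊆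
      Icc ⌈(n : ℝ) / (m + t)⌉₊ ⌊(n : ℝ) / m⌋₊ := by
  intro i hi
  simp only [fractDivLe, mem_filter, mem_Icc] at hi
  obtain ⟨⟨⟨hi1, -⟩, hfract⟩, hfloor⟩ := hi
  rw [← Nat.floor_div_eq_div (K := ℝ)] at hfloor
  have hi0 : (0 : ℝ) < i := by exact_mod_cast hi1
  have hm0 : (0 : ℝ) < m := by exact_mod_cast hm
  have hx : (0 : ℝ) ≤ n / i := by positivity
  have hmx : (m : ℝ) ≤ n / i := hfloor ▸ Nat.floor_le hx
  have hxm : (n : ℝ) / i ≤ m + t := by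
    rw [Int.fract_eq_sub_natFloor hx, hfloor] at hfract
    linarith
  rw [le_div_iff₀ hi0] at hmx
  rw [div_le_iff₀ hi0] at hxm
  refine mem_Icc.2 ⟨Nat.ceil_le.2 ?_, Nat.le_floor ?_⟩
  · rw [div_le_iff₀ (by positivity)]
    linarith
  · rw [le_div_iff₀ hm0]
    linarith

theorem Ioc_floor_subset_filter_div_eq (ht0 : 0 ≤ t) (ht1 : t ≤ 1) (hm : 0 < m) :
    Ioc ⌊(n : ℝ) / (m + t)⌋₊ ⌊(n : ℝ) / m⌋₊ ⊆
      {i ∈ fractDivLe t n | n / i = m} := by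
  intro i hi
  obtain ⟨hlo, hhi⟩ := mem_Ioc.1 hi
  have hm0 : (0 : ℝ) < m := by exact_mod_cast hm
  have hi0 : (0 : ℝ) < i := by exact_mod_cast (Nat.zero_lt_of_lt hlo)
  have hx : (0 : ℝ) ≤ n / i := by positivity
  have hlo' := (Nat.floor_lt (by positivity)).1 hlo
  have hhi' := (Nat.le_floor_iff (by positivity)).1 hhi
  rw [div_lt_iff₀ (by positivity)] at hlo'
  rw [le_div_iff₀ hm0] at hhi'
  have hmx : (m : ℝ) ≤ n / i := by rw [le_div_iff₀ hi0]; linarith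
  have hxm : (n : ℝ) / i < m + t := by rw [div_lt_iff₀ hi0]; linarith
  have hfloor : ⌊(n : ℝ) / i⌋₊ = m := (Nat.floor_eq_iff hx).2 ⟨hmx, by linarith⟩
  have hin : (i : ℝ) ≤ n := by nlinarith [(Nat.one_le_cast (α := ℝ)).2 hm]
  simp only [fractDivLe, mem_filter, mem_Icc]
  refine ⟨⟨⟨Nat.zero_lt_of_lt hlo, by exact_mod_cast hin⟩, ?_⟩,
    Nat.floor_div_eq_div (K := ℝ) n i ▸ hfloor⟩
  rw [Int.fract_eq_sub_natFloor hx, hfloor]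
  linarith

theorem abs_card_filter_div_eq_sub_le (ht0 : 0 ≤ t) (ht1 : t ≤ 1) (hm : 0 < m) :
    |(#{i ∈ fractDivLe t n | n / i = m} : ℝ) - n * (1 / m - 1 / (m + t))| ≤ 1 := by
  have hm0 : (0 : ℝ) < m := by exact_mod_cast hm
  have hab : (n : ℝ) / (m + t) ≤ n / m :=
    div_le_div_of_nonneg_left (Nat.cast_nonneg n) hm0 (by linarith)
  have hupper := (Nat.cast_le (α := ℝ)).2
    (card_le_card (filter_div_eq_subset_Icc (n := n) ht0 hm))
  have hlower := (Nat.cast_le (α := ℝ)).2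
    (card_le_card (Ioc_floor_subset_filter_div_eq (n := n) ht0 ht1 hm))
  rw [show (n : ℝ) * (1 / m - 1 / (m + t)) = n / m - n / (m + t) by ring, abs_sub_le_iff]
  constructor
  · linarith [card_Icc_ceil_floor_le (by positivity) hab]
  · linarith [sub_sub_one_le_card_Ioc_floor (b := (n : ℝ) / m)
      (by positivity : (0 : ℝ) ≤ n / (m + t))]

theorem card_filter_div_notMem_Icc_le (t : ℝ) (n M : ℕ) :
    (#{i ∈ fractDivLe t n | n / i ∉ Icc 1 M} : ℝ) ≤ n / (M + 1) := by
  have hsub :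
      {i ∈ fractDivLe t n | n / i ∉ Icc 1 M} ⊆ Icc 1 ⌊(n : ℝ) / (M + 1)⌋₊ := by
    intro i hi
    simp only [fractDivLe, mem_filter, mem_Icc, not_and, not_le] at hi
    obtain ⟨⟨⟨hi1, hin⟩, -⟩, hfloor⟩ := hi
    rw [← Nat.floor_div_eq_div (K := ℝ)] at hfloor
    have hi0 : (0 : ℝ) < i := by exact_mod_cast hi1
    have hx1 : 1 ≤ ⌊(n : ℝ) / i⌋₊ :=
      Nat.le_floor (by rw [Nat.cast_one, le_div_iff₀ hi0, one_mul]; exact_mod_cast hin)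
    have hMx : (M : ℝ) + 1 ≤ n / i := by
      have := Nat.floor_le (by positivity : (0 : ℝ) ≤ n / i)
      have : (M : ℝ) + 1 ≤ ⌊(n : ℝ) / i⌋₊ := by exact_mod_cast hfloor hx1
      linarith
    refine mem_Icc.2 ⟨hi1, Nat.le_floor ?_⟩
    rw [le_div_iff₀ (by positivity)]
    rw [le_div_iff₀ hi0] at hMx
    linarith
  calc (#{i ∈ fractDivLe t n | n / i ∉ Icc 1 M} : ℝ)
      ≤ #(Icc 1 ⌊(n : ℝ) / (M + 1)⌋₊) := by exact_mod_cast card_le_card hsub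
    _ ≤ n / (M + 1) := by
      rw [Nat.card_Icc, Nat.add_sub_cancel]
      exact Nat.floor_le (by positivity)

end Blocks

theorem abs_card_fractDivLe_sub_le {t : ℝ} (ht0 : 0 ≤ t) (ht1 : t ≤ 1) (n M : ℕ) :
    |(#(fractDivLe t n) : ℝ) - n * ∑ m ∈ Icc 1 M, (1 / (m : ℝ) - 1 / (m + t))| ≤
      M + n / (M + 1) := by
  have hsplit : (#(fractDivLe t n) : ℝ) =
      ∑ m ∈ Icc 1 M, (#{i ∈ fractDivLe t n | n / i = m} : ℝ) +
        #{i ∈ fractDivLe t n | n / i ∉ Icc 1 M} := by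
    rw [← card_filter_add_card_filter_not (s := fractDivLe t n) (fun i => n / i ∈ Icc 1 M),
      ← sum_card_fiberwise_eq_card_filter]
    push_cast
    rfl
  have hblocks : |∑ m ∈ Icc 1 M, ((#{i ∈ fractDivLe t n | n / i = m} : ℝ)
      - n * (1 / m - 1 / (m + t)))| ≤ M := by
    refine (abs_sum_le_sum_abs _ _).trans ?_
    refine (sum_le_sum fun m hm => abs_card_filter_div_eq_sub_le ht0 ht1 (mem_Icc.1 hm).1).trans ?_
    simp
  rw [sum_sub_distrib, ← mul_sum, abs_le] at hblocks
  rw [hsplit, abs_le]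
  constructor <;> linarith [hblocks.1, hblocks.2, card_filter_div_notMem_Icc_le t n M]

/-- For `t ∈ [0,1]`, the asymptotic proportion of fractional parts `{n/i}`
(`1 ≤ i ≤ n`) lying in `[0, t]` equals `Σ_{m=1}^∞ (1/m − 1/(m+t))`. -/
theorem proportion_fract_n_div_i_le (t : ℝ) (ht : t ∈ Set.Icc (0 : ℝ) 1) :
    Tendsto
      (fun n : ℕ =>
        (((Finset.Icc 1 n).filter fun i : ℕ => Int.fract ((n : ℝ) / i) ≤ t).card : ℝ) / n)
      atTop (𝓝 (∑' m : ℕ, (1 / (m + 1 : ℝ) - 1 / ((m + 1 : ℝ) + t)))) := by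
  obtain ⟨ht0, ht1⟩ := ht
  refine tendsto_of_forall_eventually_dist_lt (tendsto_sum_Icc_one_div_sub_one_div_add ht0)
    tendsto_one_div_add_atTop_nhds_zero_nat fun M δ hδ => ?_
  filter_upwards [eventually_gt_atTop 0,
    (tendsto_const_div_atTop_nhds_zero_nat (M : ℝ)).eventually (gt_mem_nhds hδ)] with n hn hMn
  have hn' : (0 : ℝ) < n := by exact_mod_cast hn
  calc dist ((#(fractDivLe t n) : ℝ) / n) (∑ m ∈ Icc 1 M, (1 / (m : ℝ) - 1 / (m + t)))
      = |(#(fractDivLe t n) : ℝ) - n * ∑ m ∈ Icc 1 M, (1 / (m : ℝ) - 1 / (m + t))| / n := by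
        rw [Real.dist_eq, ← abs_of_pos hn', ← abs_div, abs_of_pos hn', sub_div,
          mul_div_cancel_left₀ _ hn'.ne']
    _ ≤ (M + n / (M + 1)) / n := by gcongr; exact abs_card_fractDivLe_sub_le ht0 ht1 n M
    _ = 1 / (M + 1) + M / n := by field_simp; ring
    _ < 1 / (M + 1) + δ := by linarith
end

section
/- For every real x with 0 < x ≤ 1, the sum of the series Σ_{m=1}^∞ x/(m(m+x)) equals Γ'(x)/Γ(x) + 1/x + γ, where Γ'(x)/Γ(x) is the logarithmic derivative of the real Gamma function at x (the digamma function ψ(x)) and γ is the Euler–Mascheroni constant. -/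
/-!
Taking logarithms in Weierstrass's product `1 / Γ(y) = y e^{γ y} ∏ₙ (1 + y / n) e^{-y / n}`, which
follows from Euler's limit formula, gives `log Γ(y) + log y + γ y = Σₙ (y / n - log (1 + y / n))`
for `y > 0`. On every bounded interval of positive reals the termwise derivatives
`y / (n (n + y))` are dominated by a multiple of `1 / n²`, so the series may be differentiated
termwise, and at `y = x` this yields `ψ(x) + 1 / x + γ = Σₙ x / (n (n + x))`.
-/

open Real Filter Topology Finset

namespace Real

/-- `-log ((1 + y / n) e^{-y / n})` with `n = k + 1`, the indexing starting at `0`. -/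
noncomputable def weierstrassLogTerm (k : ℕ) (y : ℝ) : ℝ := y / (k + 1) - log (1 + y / (k + 1))

lemma weierstrassLogTerm_nonneg (k : ℕ) {y : ℝ} (hy : 0 ≤ y) : 0 ≤ weierstrassLogTerm k y := by
  have := log_le_sub_one_of_pos (by positivity : 0 < 1 + y / (k + 1))
  rw [weierstrassLogTerm]
  linarith

lemma weierstrassLogTerm_eq_sub_log_sub_log (k : ℕ) {y : ℝ} (hy : 0 < y) :
    weierstrassLogTerm k y = y / (k + 1) - (log (y + (k + 1 : ℕ)) - log (k + 1 : ℕ)) := by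
  rw [weierstrassLogTerm, ← log_div (by positivity) (by positivity)]
  congr 2
  field_simp
  push_cast
  ring

lemma sum_range_weierstrassLogTerm {y : ℝ} (hy : 0 < y) (N : ℕ) :
    ∑ k ∈ range N, weierstrassLogTerm k y
      = y * (harmonic N - log N) + log y + BohrMollerup.logGammaSeq y N := by
  have sum_div : ∑ k ∈ range N, y / ((k : ℝ) + 1) = y * harmonic N := by
    simp [harmonic, mul_sum, div_eq_mul_inv]
  have log_factorial : log (N.factorial : ℝ) = ∑ k ∈ range N, log (k + 1 : ℕ) := by
    rw [← prod_range_add_one_eq_factorial, Nat.cast_prod, log_prod fun k _ => by positivity]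
  rw [sum_congr rfl fun k _ => weierstrassLogTerm_eq_sub_log_sub_log k hy, sum_sub_distrib,
    sum_sub_distrib, sum_div, BohrMollerup.logGammaSeq, log_factorial,
    sum_range_succ' fun m => log (y + m)]
  simp only [Nat.cast_zero, add_zero]
  ring

lemma hasSum_weierstrassLogTerm {y : ℝ} (hy : 0 < y) :
    HasSum (weierstrassLogTerm · y) (y * eulerMascheroniConstant + log y + log (Gamma y)) := by
  rw [hasSum_iff_tendsto_nat_of_nonneg fun k => weierstrassLogTerm_nonneg k hy.le]
  simp only [sum_range_weierstrassLogTerm hy]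
  exact ((tendsto_harmonic_sub_log.const_mul y).add_const _).add
    (BohrMollerup.tendsto_log_gamma hy)

lemma hasDerivAt_weierstrassLogTerm (k : ℕ) {y : ℝ} (hy : (k + 1 : ℝ) + y ≠ 0) :
    HasDerivAt (weierstrassLogTerm k) (y / ((k + 1 : ℝ) * ((k + 1 : ℝ) + y))) y := by
  have hk : (k + 1 : ℝ) ≠ 0 := by positivity
  have hlin : HasDerivAt (fun z : ℝ => z / (k + 1)) (1 / (k + 1)) y :=
    (hasDerivAt_id y).div_const _
  have hlog := (hlin.const_add 1).log (by rw [one_add_div hk]; exact div_ne_zero hy hk)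
  refine (hlin.sub hlog).congr_deriv ?_
  field_simp
  ring

lemma norm_div_mul_add_le_div_sq {k : ℕ} {y b : ℝ} (hy : 0 ≤ y) (hyb : y ≤ b) :
    ‖y / ((k + 1 : ℝ) * ((k + 1 : ℝ) + y))‖ ≤ b / ((k : ℝ) + 1) ^ 2 := by
  rw [norm_of_nonneg (by positivity), sq]
  exact div_le_div₀ (hy.trans hyb) hyb (by positivity)
    (mul_le_mul_of_nonneg_left (by linarith) (by positivity))

lemma summable_div_nat_add_one_sq (b : ℝ) : Summable fun k : ℕ => b / ((k : ℝ) + 1) ^ 2 := by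
  have := (summable_nat_add_iff 1).mpr (summable_one_div_nat_pow.mpr one_lt_two)
  simpa [div_eq_mul_one_div b] using this.mul_left b

lemma hasDerivAt_log_Gamma {x : ℝ} (hx : 0 < x) :
    HasDerivAt (fun y => log (Gamma y)) (deriv Gamma x / Gamma x) x :=
  (differentiableAt_Gamma fun m => by linarith [(m.cast_nonneg : (0 : ℝ) ≤ m)]).hasDerivAt.log
    (Gamma_pos_of_pos hx).ne'

theorem hasSum_deriv_Gamma_div_Gamma {x : ℝ} (hx : 0 < x) :
    HasSum (fun m : ℕ => x / ((m + 1 : ℝ) * ((m + 1 : ℝ) + x)))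
      (deriv Gamma x / Gamma x + 1 / x + eulerMascheroniConstant) := by
  have hxI : x ∈ Set.Ioo 0 (x + 1) := ⟨hx, by linarith⟩
  have summable : Summable fun m : ℕ => x / ((m + 1 : ℝ) * ((m + 1 : ℝ) + x)) :=
    (summable_div_nat_add_one_sq x).of_norm_bounded fun _ => norm_div_mul_add_le_div_sq hx.le le_rfl
  have hseries : HasDerivAt (fun y => ∑' k, weierstrassLogTerm k y)
      (∑' m : ℕ, x / ((m + 1 : ℝ) * ((m + 1 : ℝ) + x))) x :=
    hasDerivAt_tsum_of_isPreconnected (summable_div_nat_add_one_sq (x + 1)) isOpen_Ioo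
      isPreconnected_Ioo (fun k y hy => hasDerivAt_weierstrassLogTerm k (by linarith [hy.1]))
      (fun k y hy => norm_div_mul_add_le_div_sq hy.1.le hy.2.le) hxI
      (hasSum_weierstrassLogTerm hx).summable hxI
  have hclosed : (fun y => ∑' k, weierstrassLogTerm k y) =ᶠ[𝓝 x]
      fun y => y * eulerMascheroniConstant + log y + log (Gamma y) := by
    filter_upwards [eventually_gt_nhds hx] with y hy using (hasSum_weierstrassLogTerm hy).tsum_eq
  have hexplicit := ((hasDerivAt_mul_const eulerMascheroniConstant).add
    (hasDerivAt_log hx.ne')).add (hasDerivAt_log_Gamma hx)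
  convert summable.hasSum using 1
  rw [(hseries.congr_of_eventuallyEq hclosed.symm).unique hexplicit]
  ring

end Real

theorem tsum_x_div_m_mul_m_add_x_general (x : ℝ) (hx0 : 0 < x) :
    ∑' m : ℕ, x / ((m + 1 : ℝ) * ((m + 1 : ℝ) + x))
      = deriv Real.Gamma x / Real.Gamma x + 1 / x + Real.eulerMascheroniConstant :=
  (hasSum_deriv_Gamma_div_Gamma hx0).tsum_eq

/-- For `0 < x ≤ 1`, `Σ_{m=1}^∞ x/(m(m+x)) = ψ(x) + 1/x + γ`, where
`ψ = Γ'/Γ` is the digamma function and `γ` the Euler–Mascheroni constant. -/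
theorem tsum_x_div_m_mul_m_add_x (x : ℝ) (hx0 : 0 < x) (hx1 : x ≤ 1) :
    ∑' m : ℕ, x / ((m + 1 : ℝ) * ((m + 1 : ℝ) + x))
      = deriv Real.Gamma x / Real.Gamma x + 1 / x + Real.eulerMascheroniConstant :=
  tsum_x_div_m_mul_m_add_x_general x hx0
end

section
/- For every real x with 0 ≤ x < 1, the sum of the series Σ_{m=1}^∞ x/(m(m+x)) equals Σ_{k=1}^∞ (−1)^{k+1} ζ(k+1) x^k, where ζ(s) = Σ_{n=1}^∞ 1/n^s denotes the Riemann zeta function evaluated at integers s ≥ 2. -/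
/-! Expanding `x / (m (m + x)) = (x / m²) / (1 + x / m)` as a geometric series in `-x / m` writes
the left-hand side as the double series `Σ_m Σ_k (-1)^k x^(k+1) / m^(k+2)`. For `|x| < 1` it is
dominated by `Σ_k |x|^(k+1) · Σ_m 1 / m²`, so the order of summation can be swapped, and the inner
sums over `m` are then the zeta values. -/

theorem hasSum_neg_one_pow_mul_pow_div_pow {𝕜 : Type*} [NormedField 𝕜] {a y : 𝕜}
    (h : ‖y‖ < ‖a‖) :
    HasSum (fun k : ℕ => (-1) ^ k * y ^ (k + 1) / a ^ (k + 2)) (y / (a * (a + y))) := by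
  have ha : a ≠ 0 := norm_pos_iff.mp ((norm_nonneg y).trans_lt h)
  have hr : ‖-y / a‖ < 1 := by rwa [norm_div, norm_neg, div_lt_one (norm_pos_iff.mpr ha)]
  have hsum := (hasSum_geometric_of_norm_lt_one hr).mul_right (y / a ^ 2)
  have hval : (1 - -y / a)⁻¹ * (y / a ^ 2) = y / (a * (a + y)) := by
    rw [neg_div, sub_neg_eq_add, one_add_div ha, inv_div]
    field_simp
  rw [hval] at hsum
  refine hsum.congr_fun fun k => ?_
  rw [div_pow, neg_pow]
  field_simp
  ring

theorem summable_neg_one_pow_mul_pow_div_succ_pow {x : ℝ} (hx : |x| < 1) :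
    Summable (Function.uncurry fun k m : ℕ =>
      (-1) ^ k * x ^ (k + 1) / ((m + 1 : ℝ)) ^ (k + 2)) := by
  have hgeo : Summable fun k : ℕ => |x| ^ (k + 1) :=
    (summable_nat_add_iff 1).mpr (summable_geometric_of_lt_one (abs_nonneg x) hx)
  have hzeta_two : Summable fun m : ℕ => 1 / ((m + 1 : ℝ)) ^ 2 := by
    exact_mod_cast (summable_nat_add_iff 1).mpr (Real.summable_one_div_nat_pow.mpr one_lt_two)
  refine (hgeo.mul_of_nonneg hzeta_two (fun _ => by positivity) fun _ => by positivity)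
    |>.of_norm_bounded ?_
  rintro ⟨k, m⟩
  have hm : (1 : ℝ) ≤ m + 1 := le_add_of_nonneg_left m.cast_nonneg
  simp only [Function.uncurry, norm_div, norm_mul, norm_pow, norm_neg, norm_one, one_pow, one_mul,
    Real.norm_eq_abs, abs_of_pos (zero_lt_one.trans_le hm)]
  rw [mul_one_div]
  gcongr
  omega

/-- For `0 ≤ x < 1`,
`Σ_{m=1}^∞ x/(m(m+x)) = Σ_{k=1}^∞ (−1)^{k+1} ζ(k+1) x^k`,
where `ζ(s) = Σ_{n=1}^∞ 1/n^s` (here reindexed with `k = j+1`, `j ≥ 0`). -/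
theorem tsum_x_div_m_mul_m_add_x_eq_zeta_series (x : ℝ) (hx0 : 0 ≤ x) (hx1 : x < 1) :
    ∑' m : ℕ, x / ((m + 1 : ℝ) * ((m + 1 : ℝ) + x))
      = ∑' k : ℕ, (-1 : ℝ) ^ k * (∑' n : ℕ, 1 / ((n + 1 : ℝ)) ^ (k + 2)) * x ^ (k + 1) := by
  have hx : |x| < 1 := abs_lt.mpr ⟨by linarith, hx1⟩
  have hx_lt_succ (m : ℕ) : ‖x‖ < ‖(m + 1 : ℝ)‖ := by
    rw [Real.norm_of_nonneg m.cast_add_one_pos.le, Real.norm_eq_abs]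
    linarith [(m.cast_nonneg : (0 : ℝ) ≤ m)]
  calc ∑' m : ℕ, x / ((m + 1 : ℝ) * ((m + 1 : ℝ) + x))
      = ∑' (m : ℕ) (k : ℕ), (-1) ^ k * x ^ (k + 1) / ((m + 1 : ℝ)) ^ (k + 2) :=
        tsum_congr fun m => (hasSum_neg_one_pow_mul_pow_div_pow (hx_lt_succ m)).tsum_eq.symm
    _ = ∑' (k : ℕ) (m : ℕ), (-1) ^ k * x ^ (k + 1) / ((m + 1 : ℝ)) ^ (k + 2) :=
        (summable_neg_one_pow_mul_pow_div_succ_pow hx).tsum_comm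
    _ = _ := tsum_congr fun k => by
        rw [mul_right_comm, ← tsum_mul_left]
        exact tsum_congr fun m => by ring
end

section
/- The limit lim_{n→∞} (1/n) Σ_{i=1}^n {n/i} exists and equals 1 − γ, where γ is the Euler–Mascheroni constant. -/
/-!
The average `(1/n) ∑ {n/i}` is the right-endpoint Riemann sum of `f x = {1/x}` on `(0, 1]`.
As `f` is bounded and continuous off the countable set `{1/m}`, dominated convergence applied
to the step functions `x ↦ f (⌈n x⌉ / n)` shows that these Riemann sums tend to `∫₀¹ {1/x} dx`.
On `(1/(k+2), 1/(k+1)]` we have `{1/x} = 1/x - (k+1)`, so the integral over `[1/(n+1), 1]`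
telescopes to `1 - (H_{n+1} - log (n+1))`, which tends to `1 - γ`.
-/

open Filter Topology MeasureTheory Set

theorem tendsto_natCeil_mul_div {x : ℝ} (hx : 0 ≤ x) :
    Tendsto (fun n : ℕ => (⌈n * x⌉₊ : ℝ) / n) atTop (𝓝 x) := by
  have hupper : Tendsto (fun n : ℕ => x + 1 / (n : ℝ)) atTop (𝓝 x) := by
    simpa using tendsto_one_div_atTop_nhds_zero_nat.const_add x
  refine tendsto_of_tendsto_of_tendsto_of_le_of_le' tendsto_const_nhds hupper ?_ ?_ <;>
    filter_upwards [eventually_gt_atTop 0] with n hn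
  · rw [le_div_iff₀ (by positivity), mul_comm]
    exact Nat.le_ceil _
  · rw [div_le_iff₀ (by positivity), add_mul, one_div_mul_cancel (by positivity), mul_comm]
    exact (Nat.ceil_lt_add_one (by positivity)).le

theorem natCeil_mul_div_mem_Ioc {n : ℕ} (hn : n ≠ 0) {x : ℝ} (hx : x ∈ Ioc (0 : ℝ) 1) :
    (⌈n * x⌉₊ : ℝ) / n ∈ Ioc (0 : ℝ) 1 := by
  have hn' : (0 : ℝ) < n := by positivity
  refine ⟨div_pos (Nat.cast_pos.2 (Nat.ceil_pos.2 (mul_pos hn' hx.1))) hn', ?_⟩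
  rw [div_le_one hn', Nat.cast_le, Nat.ceil_le]
  exact mul_le_of_le_one_right hn'.le hx.2

section RiemannSum

variable {E : Type*} [NormedAddCommGroup E] [NormedSpace ℝ E]

noncomputable def rightRiemannSum (f : ℝ → E) (n : ℕ) : E :=
  (n : ℝ)⁻¹ • ∑ i ∈ Finset.Icc 1 n, f (i / n)

variable [CompleteSpace E]

theorem integral_comp_natCeil (g : ℕ → E) (n : ℕ) :
    ∫ y in (0 : ℝ)..n, g ⌈y⌉₊ = ∑ i ∈ Finset.Icc 1 n, g i := by
  have hpiece (k : ℕ) :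
      EqOn (fun y : ℝ => g ⌈y⌉₊) (fun _ => g (k + 1)) (uIoc (k : ℝ) (k + 1 : ℕ)) := by
    intro y hy
    rw [uIoc_of_le (by simp)] at hy
    exact congrArg g ((Nat.ceil_eq_iff k.succ_ne_zero).2 ⟨by simpa using hy.1, hy.2⟩)
  have hint (k : ℕ) (_ : k < n) : IntervalIntegrable (fun y : ℝ => g ⌈y⌉₊) volume k (k + 1 : ℕ) :=
    intervalIntegrable_const.congr (hpiece k).symm
  calc ∫ y in (0 : ℝ)..n, g ⌈y⌉₊
      = ∑ k ∈ Finset.range n, ∫ y in (k : ℝ)..(k + 1 : ℕ), g ⌈y⌉₊ := by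
        rw [intervalIntegral.sum_integral_adjacent_intervals hint, Nat.cast_zero]
    _ = ∑ k ∈ Finset.range n, g (k + 1) := by
        refine Finset.sum_congr rfl fun k _ => ?_
        rw [intervalIntegral.integral_congr_ae (Eventually.of_forall (hpiece k)),
          intervalIntegral.integral_const]
        simp
    _ = ∑ i ∈ Finset.Icc 1 n, g i := by
        rw [Finset.range_eq_Ico, Finset.sum_Ico_add' g 0 n 1]
        rfl

theorem integral_comp_natCeil_mul_div (f : ℝ → E) {n : ℕ} (hn : n ≠ 0) :
    ∫ x in (0 : ℝ)..1, f (⌈n * x⌉₊ / n) = rightRiemannSum f n := by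
  rw [intervalIntegral.integral_comp_mul_left (fun y => f (⌈y⌉₊ / n)) (by positivity),
    mul_zero, mul_one, integral_comp_natCeil (fun i => f (i / n)), rightRiemannSum]

theorem tendsto_rightRiemannSum {f : ℝ → E} {C : ℝ} (hbound : ∀ x ∈ Ioc (0 : ℝ) 1, ‖f x‖ ≤ C)
    (hcont : ∀ᵐ x, x ∈ Ioc (0 : ℝ) 1 → ContinuousAt f x) :
    Tendsto (rightRiemannSum f) atTop (𝓝 (∫ x in (0 : ℝ)..1, f x)) := by
  set F : ℕ → ℝ → E := fun n x => f (⌈n * x⌉₊ / n)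
  have hI : uIoc (0 : ℝ) 1 = Ioc 0 1 := uIoc_of_le zero_le_one
  have hmeas (n : ℕ) : AEStronglyMeasurable (F n) (volume.restrict (uIoc 0 1)) :=
    (StronglyMeasurable.of_discrete.comp_measurable (f := fun k : ℕ => f (k / n))
      (Nat.measurable_ceil.comp (measurable_const_mul (n : ℝ)))).aestronglyMeasurable
  have hdom : ∀ᶠ n in atTop, ∀ᵐ x, x ∈ uIoc (0 : ℝ) 1 → ‖F n x‖ ≤ C :=
    (eventually_ne_atTop 0).mono fun n hn => Eventually.of_forall fun x hx =>
      hbound _ (natCeil_mul_div_mem_Ioc hn (hI ▸ hx))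
  have hlim : ∀ᵐ x, x ∈ uIoc (0 : ℝ) 1 → Tendsto (F · x) atTop (𝓝 (f x)) :=
    hcont.mono fun x hx hxI =>
      (hx (hI ▸ hxI)).tendsto.comp (tendsto_natCeil_mul_div (hI ▸ hxI).1.le)
  exact (intervalIntegral.tendsto_integral_filter_of_dominated_convergence _
    (Eventually.of_forall hmeas) hdom intervalIntegrable_const hlim).congr'
    ((eventually_ne_atTop 0).mono fun n hn => integral_comp_natCeil_mul_div f hn)

end RiemannSum

theorem norm_fract_le_one (x : ℝ) : ‖Int.fract x‖ ≤ 1 := by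
  rw [Real.norm_eq_abs, Int.abs_fract]
  exact (Int.fract_lt_one x).le

theorem intervalIntegrable_fract_inv (a b : ℝ) :
    IntervalIntegrable (fun x : ℝ => Int.fract x⁻¹) volume a b := by
  have h (s t : ℝ) : IntegrableOn (fun x : ℝ => Int.fract x⁻¹) (Ioc s t) :=
    Measure.integrableOn_of_bounded measure_Ioc_lt_top.ne
      (measurable_fract.comp measurable_inv).aestronglyMeasurable
      (Eventually.of_forall fun x => norm_fract_le_one x⁻¹)
  exact ⟨h a b, h b a⟩

theorem integral_fract_inv_inv_succ_succ_inv_succ (k : ℕ) :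
    ∫ x in ((k : ℝ) + 2)⁻¹..((k : ℝ) + 1)⁻¹, Int.fract x⁻¹
      = Real.log (k + 2) - Real.log (k + 1) - ((k : ℝ) + 2)⁻¹ := by
  have hk1 : (0 : ℝ) < k + 1 := by positivity
  have hk2 : (0 : ℝ) < k + 2 := by positivity
  have hle : ((k : ℝ) + 2)⁻¹ ≤ ((k : ℝ) + 1)⁻¹ := inv_anti₀ hk1 (by linarith)
  have hfloor : ∀ x ∈ uIoc ((k : ℝ) + 2)⁻¹ ((k : ℝ) + 1)⁻¹,
      Int.fract x⁻¹ = x⁻¹ - ((k : ℝ) + 1) := by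
    intro x hx
    rw [uIoc_of_le hle] at hx
    have hx0 : 0 < x := (inv_pos.2 hk2).trans hx.1
    have hfl : ⌊x⁻¹⌋ = (k : ℤ) + 1 := by
      rw [Int.floor_eq_iff]
      push_cast
      constructor
      · exact (le_inv_comm₀ hk1 hx0).2 hx.2
      · linarith [(inv_lt_comm₀ hx0 hk2).2 hx.1]
    rw [Int.fract, hfl]
    push_cast
    ring
  have hzero : (0 : ℝ) ∉ uIcc ((k : ℝ) + 2)⁻¹ ((k : ℝ) + 1)⁻¹ := by
    rw [uIcc_of_le hle]
    exact fun h => (inv_pos.2 hk2).not_ge h.1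
  rw [intervalIntegral.integral_congr_ae (Eventually.of_forall hfloor),
    intervalIntegral.integral_sub (intervalIntegral.intervalIntegrable_inv
      (fun x hx => ne_of_mem_of_not_mem hx hzero) continuousOn_id) intervalIntegrable_const,
    integral_inv hzero, intervalIntegral.integral_const, smul_eq_mul, inv_div_inv,
    Real.log_div hk2.ne' hk1.ne']
  field_simp
  ring

theorem integral_fract_inv_inv_succ_one (n : ℕ) :
    ∫ x in ((n : ℝ) + 1)⁻¹..1, Int.fract x⁻¹ = 1 - (harmonic (n + 1) - Real.log (n + 1)) := by
  induction n with
  | zero => simp [harmonic_succ]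
  | succ n ih =>
    have hcast : ((n + 1 : ℕ) : ℝ) + 1 = n + 2 := by push_cast; ring
    rw [hcast, ← intervalIntegral.integral_add_adjacent_intervals (b := ((n : ℝ) + 1)⁻¹)
      (intervalIntegrable_fract_inv _ _) (intervalIntegrable_fract_inv _ _),
      integral_fract_inv_inv_succ_succ_inv_succ, ih, harmonic_succ (n + 1)]
    push_cast
    ring

theorem continuousAt_fract_inv {x : ℝ} (hx : x ∉ range fun m : ℤ => (m : ℝ)⁻¹) :
    ContinuousAt (fun x : ℝ => Int.fract x⁻¹) x := by
  have hx0 : x ≠ 0 := fun h => hx ⟨0, by simp [h]⟩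
  have hnotint : x⁻¹ ≠ ⌊x⁻¹⌋ := fun h =>
    hx ⟨⌊x⁻¹⌋, show ((⌊x⁻¹⌋ : ℤ) : ℝ)⁻¹ = x by rw [← h, inv_inv]⟩
  exact (continuousAt_fract hnotint).comp (continuousAt_inv₀ hx0)

theorem ae_continuousAt_fract_inv : ∀ᵐ x : ℝ, ContinuousAt (fun x : ℝ => Int.fract x⁻¹) x :=
  ((countable_range _).ae_notMem volume).mono fun _ => continuousAt_fract_inv

theorem integral_fract_inv_zero_one :
    ∫ x in (0 : ℝ)..1, Int.fract x⁻¹ = 1 - Real.eulerMascheroniConstant := by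
  have hprim : Continuous fun a : ℝ => ∫ x in a..1, Int.fract x⁻¹ := by
    simp_rw [intervalIntegral.integral_symm 1]
    exact (intervalIntegral.continuous_primitive intervalIntegrable_fract_inv 1).neg
  have hinv : Tendsto (fun n : ℕ => ((n : ℝ) + 1)⁻¹) atTop (𝓝 0) := by
    simpa only [one_div] using (tendsto_one_div_add_atTop_nhds_zero_nat (𝕜 := ℝ))
  have hγ : Tendsto (fun n : ℕ => 1 - ((harmonic (n + 1) : ℝ) - Real.log (n + 1))) atTop
      (𝓝 (1 - Real.eulerMascheroniConstant)) := by
    simpa only [Function.comp_def, Nat.cast_add, Nat.cast_one] using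
      (Real.tendsto_harmonic_sub_log.comp (tendsto_add_atTop_nat 1)).const_sub 1
  exact tendsto_nhds_unique
    ((hprim.tendsto 0).comp hinv |>.congr integral_fract_inv_inv_succ_one) hγ

/-- `lim_{n→∞} (1/n) Σ_{i=1}^n {n/i} = 1 − γ`, with `γ` the Euler–Mascheroni
constant. -/
theorem tendsto_average_fract_n_div_i :
    Tendsto
      (fun n : ℕ => (1 / (n : ℝ)) * ∑ i ∈ Finset.Icc 1 n, Int.fract ((n : ℝ) / i))
      atTop (𝓝 (1 - Real.eulerMascheroniConstant)) := by
  have hlim := tendsto_rightRiemannSum (fun x _ => norm_fract_le_one x⁻¹)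
    (ae_continuousAt_fract_inv.mono fun _ hx _ => hx)
  rw [integral_fract_inv_zero_one] at hlim
  refine hlim.congr fun n => ?_
  simp only [rightRiemannSum, inv_div, smul_eq_mul, one_div]
end

section
/- As n → ∞, (1/n) Σ_{i=1}^n ⌊n/i⌋ = ln n + 2γ − 1 + o(1); equivalently, the sequence (1/n) Σ_{i=1}^n ⌊n/i⌋ − ln n converges to 2γ − 1, where γ is the Euler–Mascheroni constant. -/
/-!
Dirichlet's hyperbola method: with `m = ⌊√n⌋`,
`∑_{i ≤ n} ⌊n/i⌋ = 2 ∑_{i ≤ m} ⌊n/i⌋ - m² = 2 n H_m - m² - 2 ∑_{i ≤ m} {n/i}`.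
Dividing by `n`, the fractional parts contribute `O(m/n) = O(1/√n)`, `m²/n → 1`, and
`2 H_m - log n = 2 (H_m - log m) + log (m²/n) → 2γ`.
-/

open Finset Filter Topology Real

namespace Nat

lemma div_eq_sum_ite_mul_le (n : ℕ) {i : ℕ} (hi : 0 < i) :
    n / i = ∑ j ∈ Ioc 0 n, if i * j ≤ n then 1 else 0 := by
  rw [sum_boole, cast_id]
  have hfilter : {j ∈ Ioc 0 n | i * j ≤ n} = Ioc 0 (n / i) := by
    ext j
    simp only [mem_filter, mem_Ioc, le_div_iff_mul_le hi, mul_comm j]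
    constructor
    · rintro ⟨⟨hj, -⟩, h⟩; exact ⟨hj, h⟩
    · rintro ⟨hj, h⟩; exact ⟨⟨hj, (Nat.le_mul_of_pos_left j hi).trans h⟩, h⟩
  rw [hfilter, card_Ioc, Nat.sub_zero]

/-- Count the lattice points of `(0, n]²` under the hyperbola `i * j = n`: the square
`(0, √n]²` lies entirely below it and the square `(√n, n]²` entirely above it. -/
theorem sum_Ioc_div_add_sqrt_mul_sqrt (n : ℕ) :
    ∑ i ∈ Ioc 0 n, n / i + sqrt n * sqrt n = 2 * ∑ i ∈ Ioc 0 (sqrt n), n / i := by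
  set m := sqrt n
  have hmn : m ≤ n := sqrt_le_self n
  set F : ℕ → ℕ → ℕ := fun i j => if i * j ≤ n then 1 else 0
  have hrow : ∀ i ∈ Ioc 0 n, n / i = ∑ j ∈ Ioc 0 m, F i j + ∑ j ∈ Ioc m n, F i j :=
    fun i hi => by
      rw [sum_Ioc_consecutive _ (zero_le m) hmn]
      exact div_eq_sum_ite_mul_le n (mem_Ioc.1 hi).1
  have hsquare : ∀ i ∈ Ioc 0 m, ∀ j ∈ Ioc 0 m, F i j = 1 := fun i hi j hj =>
    if_pos ((Nat.mul_le_mul (mem_Ioc.1 hi).2 (mem_Ioc.1 hj).2).trans (sqrt_le n))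
  have hcorner : ∀ i ∈ Ioc m n, ∀ j ∈ Ioc m n, F i j = 0 := fun i hi j hj =>
    if_neg (not_le.2 ((lt_succ_sqrt n).trans_le
      (Nat.mul_le_mul (mem_Ioc.1 hi).1 (mem_Ioc.1 hj).1)))
  set X := ∑ i ∈ Ioc 0 m, ∑ j ∈ Ioc m n, F i j
  have hlow : ∑ i ∈ Ioc 0 m, n / i = m * m + X := by
    rw [sum_congr rfl fun i hi => hrow i (Ioc_subset_Ioc_right hmn hi), sum_add_distrib,
      sum_congr rfl fun i hi => sum_congr rfl (hsquare i hi)]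
    simp [X]
  have hhigh : ∑ i ∈ Ioc m n, n / i = X := by
    rw [sum_congr rfl fun i hi => hrow i (Ioc_subset_Ioc_left (zero_le m) hi), sum_add_distrib,
      sum_congr rfl fun i hi => sum_congr rfl (hcorner i hi)]
    simp only [sum_const_zero, add_zero, X, F]
    rw [sum_comm]
    simp only [mul_comm]
  rw [← sum_Ioc_consecutive _ (zero_le m) hmn, hhigh, hlow]
  ring

lemma tendsto_sqrt_atTop : Tendsto sqrt atTop atTop :=
  tendsto_atTop_atTop.2 fun b => ⟨b * b, fun _ h => le_sqrt.2 h⟩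

end Nat

lemma Int.floor_natCast_div_natCast {k : Type*} [Field k] [LinearOrder k] [IsStrictOrderedRing k]
    [FloorRing k] (n i : ℕ) : ⌊(n : k) / i⌋ = ((n / i : ℕ) : ℤ) := by
  rw [Int.floor_div_natCast, Int.floor_natCast, Int.natCast_div]

lemma sum_Icc_floor_div_eq_hyperbola (n : ℕ) :
    ∑ i ∈ Icc 1 n, (⌊(n : ℝ) / i⌋ : ℝ) =
      2 * ∑ i ∈ Icc 1 (Nat.sqrt n), (⌊(n : ℝ) / i⌋ : ℝ) - (Nat.sqrt n : ℝ) ^ 2 := by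
  have h := congrArg (Nat.cast : ℕ → ℝ) (Nat.sum_Ioc_div_add_sqrt_mul_sqrt n)
  simp only [← Icc_add_one_left_eq_Ioc, zero_add] at h
  simp only [Int.floor_natCast_div_natCast, Int.cast_natCast]
  push_cast at h
  linarith

lemma tendsto_sqrt_sq_div : Tendsto (fun n : ℕ => (Nat.sqrt n : ℝ) ^ 2 / n) atTop (𝓝 1) := by
  have hlow : Tendsto (fun n : ℕ => ((Nat.sqrt n : ℝ) / (Nat.sqrt n + 1)) ^ 2) atTop (𝓝 1) := by
    simpa using ((tendsto_natCast_div_add_atTop (1 : ℝ)).comp Nat.tendsto_sqrt_atTop).pow 2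
  refine tendsto_of_tendsto_of_tendsto_of_le_of_le' hlow tendsto_const_nhds ?_ ?_
  · filter_upwards [eventually_gt_atTop 0] with n hn
    rw [div_pow]
    gcongr
    exact_mod_cast (Nat.lt_succ_sqrt' n).le
  · filter_upwards with n
    exact div_le_one_of_le₀ (by exact_mod_cast Nat.sqrt_le' n) n.cast_nonneg

lemma tendsto_sum_fract_div :
    Tendsto (fun n : ℕ => (∑ i ∈ Icc 1 (Nat.sqrt n), Int.fract ((n : ℝ) / i)) / n) atTop (𝓝 0) := by
  have hinv : Tendsto (fun n : ℕ => (Nat.sqrt n : ℝ)⁻¹) atTop (𝓝 0) :=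
    tendsto_inv_atTop_zero.comp (tendsto_natCast_atTop_atTop.comp Nat.tendsto_sqrt_atTop)
  refine tendsto_of_tendsto_of_tendsto_of_le_of_le' tendsto_const_nhds hinv ?_ ?_
  · filter_upwards with n
    exact div_nonneg (sum_nonneg fun i _ => Int.fract_nonneg _) n.cast_nonneg
  · filter_upwards [eventually_gt_atTop 0] with n hn
    have hm : (0 : ℝ) < Nat.sqrt n := by exact_mod_cast Nat.sqrt_pos.2 hn
    have hR : ∑ i ∈ Icc 1 (Nat.sqrt n), Int.fract ((n : ℝ) / i) ≤ Nat.sqrt n := by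
      simpa using sum_le_card_nsmul (Icc 1 (Nat.sqrt n)) (fun i : ℕ => Int.fract ((n : ℝ) / i)) 1
        fun i _ => (Int.fract_lt_one _).le
    have hsq : (Nat.sqrt n : ℝ) * Nat.sqrt n ≤ n := by exact_mod_cast Nat.sqrt_le n
    rw [div_le_iff₀ (by positivity), inv_mul_eq_div, le_div_iff₀ hm]
    nlinarith

lemma average_floor_div_sub_log_eq {n : ℕ} (hn : 0 < n) :
    (1 / (n : ℝ)) * (∑ i ∈ Icc 1 n, (⌊(n : ℝ) / i⌋ : ℝ)) - log n =
      2 * (harmonic (Nat.sqrt n) - log (Nat.sqrt n)) - 1 + log ((Nat.sqrt n : ℝ) ^ 2 / n)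
        + (1 - (Nat.sqrt n : ℝ) ^ 2 / n)
        - 2 * ((∑ i ∈ Icc 1 (Nat.sqrt n), Int.fract ((n : ℝ) / i)) / n) := by
  have hn' : (n : ℝ) ≠ 0 := by positivity
  have hm : (Nat.sqrt n : ℝ) ≠ 0 := by exact_mod_cast (Nat.sqrt_pos.2 hn).ne'
  have hfloor : ∑ i ∈ Icc 1 (Nat.sqrt n), (⌊(n : ℝ) / i⌋ : ℝ) =
      n * harmonic (Nat.sqrt n) - ∑ i ∈ Icc 1 (Nat.sqrt n), Int.fract ((n : ℝ) / i) := by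
    rw [harmonic_eq_sum_Icc, Rat.cast_sum, mul_sum, ← sum_sub_distrib]
    refine sum_congr rfl fun i _ => ?_
    rw [Int.fract]
    push_cast
    ring
  rw [sum_Icc_floor_div_eq_hyperbola, hfloor, log_div (pow_ne_zero 2 hm) hn', log_pow]
  field_simp
  ring

/-- `(1/n) Σ_{i=1}^n ⌊n/i⌋ − ln n → 2γ − 1` as `n → ∞`, with `γ` the
Euler–Mascheroni constant. -/
theorem tendsto_average_floor_n_div_i_sub_log :
    Tendsto
      (fun n : ℕ =>
        (1 / (n : ℝ)) * (∑ i ∈ Finset.Icc 1 n, (⌊(n : ℝ) / i⌋ : ℝ)) - Real.log n)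
      atTop (𝓝 (2 * Real.eulerMascheroniConstant - 1)) := by
  have hharm := tendsto_harmonic_sub_log.comp Nat.tendsto_sqrt_atTop
  have hsq := tendsto_sqrt_sq_div
  have hlim := ((((hharm.const_mul 2).sub_const 1).add (hsq.log one_ne_zero)).add
    (hsq.const_sub 1)).sub (tendsto_sum_fract_div.const_mul 2)
  simp only [log_one, sub_self, add_zero, mul_zero, sub_zero] at hlim
  refine hlim.congr' ?_
  filter_upwards [eventually_gt_atTop 0] with n hn
  exact (average_floor_div_sub_log_eq hn).symm
end

section
/- Let f : [1,∞) → ℝ be a bounded continuous function. Then lim_{n→∞} (1/n) Σ_{i=1}^n f(n/i) = ∫_0^1 f(1/t) dt. -/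
open Filter Topology MeasureTheory

/-!
The average `(1/n) ∑ f (n/i)` is exactly the integral over `(0,1]` of the step function
`t ↦ f (n / ⌈n t⌉₊)`. These step functions are bounded by `sup |f|` on `(0,1]` and converge
pointwise to `f (1/t)` because `⌈n t⌉₊ / n → t`, so dominated convergence gives the limit.
-/

lemma natCeil_eq_of_mem_uIoc {k : ℕ} {s : ℝ} (hs : s ∈ Set.uIoc (k : ℝ) (k + 1 : ℕ)) :
    ⌈s⌉₊ = k + 1 := by
  rw [Set.uIoc_of_le (by norm_cast; omega)] at hs
  rw [Nat.ceil_eq_iff (by omega)]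
  push_cast at hs ⊢
  exact ⟨by linarith [hs.1], hs.2⟩

section

variable {E : Type*} [NormedAddCommGroup E] [NormedSpace ℝ E] [CompleteSpace E]

lemma intervalIntegral_comp_natCeil (h : ℕ → E) (n : ℕ) :
    ∫ s in (0 : ℝ)..n, h ⌈s⌉₊ = ∑ i ∈ Finset.Icc 1 n, h i := by
  have hconst : ∀ k : ℕ, Set.EqOn (fun _ => h (k + 1)) (fun s : ℝ => h ⌈s⌉₊)
      (Set.uIoc (k : ℝ) (k + 1 : ℕ)) := fun k s hs => by simp only [natCeil_eq_of_mem_uIoc hs]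
  have hint : ∀ k < n, IntervalIntegrable (fun s : ℝ => h ⌈s⌉₊) volume (k : ℝ) (k + 1 : ℕ) :=
    fun k _ => intervalIntegrable_const.congr (hconst k)
  rw [← Nat.cast_zero, ← intervalIntegral.sum_integral_adjacent_intervals hint]
  have hpiece : ∀ k : ℕ, ∫ s in (k : ℝ)..(k + 1 : ℕ), h ⌈s⌉₊ = h (k + 1) := fun k => by
    rw [← intervalIntegral.integral_congr_ae (ae_of_all _ (hconst k)),
      intervalIntegral.integral_const]
    simp
  simp only [hpiece]
  rw [Finset.range_eq_Ico, Finset.sum_Ico_add', Finset.Ico_add_one_right_eq_Icc, zero_add]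

lemma setIntegral_Ioc_zero_one_comp_natCeil_mul (h : ℕ → E) {n : ℕ} (hn : n ≠ 0) :
    ∫ t in Set.Ioc (0 : ℝ) 1, h ⌈n * t⌉₊ = (n : ℝ)⁻¹ • ∑ i ∈ Finset.Icc 1 n, h i := by
  rw [← intervalIntegral.integral_of_le zero_le_one,
    intervalIntegral.integral_comp_mul_left (fun s => h ⌈s⌉₊) (Nat.cast_ne_zero.2 hn),
    mul_zero, mul_one, intervalIntegral_comp_natCeil]

end

lemma tendsto_natCast_div_natCeil_mul {t : ℝ} (ht : 0 < t) :
    Tendsto (fun n : ℕ => (n : ℝ) / ⌈n * t⌉₊) atTop (𝓝 t⁻¹) := by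
  have hceil : Tendsto (fun n : ℕ => (⌈t * n⌉₊ : ℝ) / n) atTop (𝓝 t) :=
    (tendsto_nat_ceil_mul_div_atTop ht.le).comp tendsto_natCast_atTop_atTop
  simpa only [inv_div, mul_comm t] using hceil.inv₀ ht.ne'

lemma one_le_natCast_div_natCeil_mul {n : ℕ} {t : ℝ} (hn : n ≠ 0) (ht : t ∈ Set.Ioc 0 1) :
    1 ≤ (n : ℝ) / ⌈n * t⌉₊ := by
  have hn' : (0 : ℝ) < n := by positivity
  have hpos : (0 : ℝ) < ⌈n * t⌉₊ := by
    exact_mod_cast Nat.ceil_pos.2 (mul_pos hn' ht.1)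
  rw [one_le_div hpos]
  exact_mod_cast Nat.ceil_le.2 (by simpa using mul_le_of_le_one_right hn'.le ht.2)

lemma tendsto_comp_natCast_div_natCeil_mul {X : Type*} [TopologicalSpace X] {f : ℝ → X}
    (hf : ContinuousOn f (Set.Ici 1))
    {t : ℝ} (ht : t ∈ Set.Ioc 0 1) :
    Tendsto (fun n : ℕ => f (n / ⌈n * t⌉₊)) atTop (𝓝 (f t⁻¹)) := by
  have hmem : t⁻¹ ∈ Set.Ici (1 : ℝ) := Set.mem_Ici.2 (one_le_inv₀ ht.1 |>.2 ht.2)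
  refine (hf _ hmem).tendsto.comp
    (tendsto_nhdsWithin_iff.2 ⟨tendsto_natCast_div_natCeil_mul ht.1, ?_⟩)
  filter_upwards [eventually_ne_atTop 0] with n hn
  exact one_le_natCast_div_natCeil_mul hn ht

/-- If `f : [1,∞) → ℝ` is bounded and continuous, then
`lim_{n→∞} (1/n) Σ_{i=1}^n f(n/i) = ∫_0^1 f(1/t) dt`. -/
theorem tendsto_average_f_n_div_i
    (f : ℝ → ℝ) (hf : ContinuousOn f (Set.Ici (1 : ℝ)))
    (hbd : ∃ M : ℝ, ∀ x ∈ Set.Ici (1 : ℝ), |f x| ≤ M) :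
    Tendsto
      (fun n : ℕ => (1 / (n : ℝ)) * ∑ i ∈ Finset.Icc 1 n, f ((n : ℝ) / i))
      atTop (𝓝 (∫ t in Set.Ioc (0 : ℝ) 1, f (1 / t))) := by
  obtain ⟨M, hM⟩ := hbd
  have hriemann : ∀ᶠ n : ℕ in atTop, ∫ t in Set.Ioc (0 : ℝ) 1, f (n / ⌈n * t⌉₊) =
      1 / (n : ℝ) * ∑ i ∈ Finset.Icc 1 n, f ((n : ℝ) / i) := by
    filter_upwards [eventually_ne_atTop 0] with n hn
    rw [setIntegral_Ioc_zero_one_comp_natCeil_mul (fun i => f (n / i)) hn, smul_eq_mul, one_div]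
  refine (tendsto_integral_filter_of_dominated_convergence (fun _ => M) ?_ ?_ ?_ ?_).congr'
    hriemann
  · exact Eventually.of_forall fun n =>
      ((measurable_from_nat (f := fun i : ℕ => f (n / i))).comp
        (Nat.measurable_ceil.comp (measurable_const_mul _))).aestronglyMeasurable
  · filter_upwards [eventually_ne_atTop 0] with n hn
    exact ae_restrict_of_forall_mem measurableSet_Ioc fun t ht =>
      hM _ (one_le_natCast_div_natCeil_mul hn ht)
  · exact integrable_const M
  · simp only [one_div]
    exact ae_restrict_of_forall_mem measurableSet_Ioc fun t ht =>
      tendsto_comp_natCast_div_natCeil_mul hf ht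
end

section
/- Let P be a real polynomial of degree q ≥ 1 with positive leading coefficient, and for each sufficiently large integer n let N(n) be the greatest positive integer i such that P(i) ≤ n. Then for every x ∈ (0,1], the proportion (1/N(n))·#{i ∈ ℕ : 1 ≤ i ≤ N(n) and P(i) ≤ n·x} tends to x^{1/q} as n → ∞. -/
/-! Write `d = deg P` and `a` for its leading coefficient. Since `P(t) ~ a t^d` and
`P(N) ≤ n < P(N + 1)`, we get `N^d ~ n / a`; likewise the largest `M ≤ N` with `P(M) ≤ n x`
satisfies `P(M) ≤ n x < P(M + 1)`, so `M^d ~ n x / a` and `M / N → x^{1/d}`. Since `P` is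
increasing beyond some `T`, the counted set lies between `[T + 1, M]` and `[1, M]`, whose sizes
differ by at most `T = o(N)`. -/

open Filter Topology Polynomial

theorem Filter.Tendsto.of_pow {ι : Type*} {l : Filter ι} {f : ι → ℝ} {c : ℝ} {d : ℕ}
    (hd : d ≠ 0) (hf : ∀ᶠ i in l, 0 ≤ f i) (h : Tendsto (fun i => f i ^ d) l (𝓝 c)) :
    Tendsto f l (𝓝 (c ^ ((1 : ℝ) / d))) := by
  refine (h.rpow_const (Or.inr (by positivity))).congr' ?_
  filter_upwards [hf] with i hi
  rw [one_div, Real.pow_rpow_inv_natCast hi hd]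

namespace Polynomial

theorem tendsto_eval_div_pow_natDegree {𝕜 : Type*} [NormedField 𝕜] [LinearOrder 𝕜]
    [IsStrictOrderedRing 𝕜] [OrderTopology 𝕜] (P : 𝕜[X]) :
    Tendsto (fun t => P.eval t / t ^ P.natDegree) atTop (𝓝 P.leadingCoeff) := by
  refine (P.isEquivalent_atTop_lead.div (.refl (u := (· ^ P.natDegree)))).symm.tendsto_nhds
    (tendsto_const_nhds.congr' ?_)
  filter_upwards [eventually_gt_atTop 0] with t ht
  simp [ht.ne']

theorem eventually_eval_pos {P : ℝ[X]} (hP : 0 < P.leadingCoeff) :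
    ∀ᶠ t in atTop, 0 < P.eval t := by
  filter_upwards [P.tendsto_eval_div_pow_natDegree.eventually (eventually_gt_nhds hP),
    eventually_gt_atTop 0] with t hratio ht
  exact (div_pos_iff_of_pos_right (pow_pos ht _)).1 hratio

theorem exists_strictMonoOn_Ici_eval {P : ℝ[X]} (hP : 0 < P.leadingCoeff)
    (hdeg : P.natDegree ≠ 0) : ∃ T, StrictMonoOn (fun t => P.eval t) (Set.Ici T) := by
  have hderiv : 0 < P.derivative.leadingCoeff := by
    rw [leadingCoeff_derivative]
    exact mul_pos hP (by positivity)
  obtain ⟨T, hT⟩ := eventually_atTop.1 (eventually_eval_pos hderiv)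
  refine ⟨T, strictMonoOn_of_deriv_pos (convex_Ici T) P.continuousOn fun t ht => ?_⟩
  rw [interior_Ici] at ht
  simpa using hT t ht.le

theorem tendsto_atTop_of_le_eval {ι : Type*} {l : Filter ι} (P : ℝ[X]) {y : ι → ℝ}
    {K : ι → ℕ} (hy : Tendsto y l atTop) (hK : ∀ᶠ i in l, y i ≤ P.eval (K i : ℝ)) :
    Tendsto K l atTop := by
  refine tendsto_atTop.2 fun m => ?_
  obtain ⟨C, hC⟩ := (isCompact_Icc (a := (0 : ℝ)) (b := m)).bddAbove_image P.continuousOn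
  filter_upwards [hy.eventually_gt_atTop C, hK] with i hyC hyK
  by_contra! hlt
  have hmem : (K i : ℝ) ∈ Set.Icc 0 (m : ℝ) := ⟨K i |>.cast_nonneg, by exact_mod_cast hlt.le⟩
  exact (hyK.trans (hC ⟨_, hmem, rfl⟩)).not_gt hyC

theorem tendsto_natCast_atTop_of_lt_eval_add_one {ι : Type*} {l : Filter ι} (P : ℝ[X])
    {y : ι → ℝ} {K : ι → ℕ} (hy : Tendsto y l atTop)
    (hK : ∀ᶠ i in l, y i < P.eval ((K i : ℝ) + 1)) :
    Tendsto (fun i => (K i : ℝ)) l atTop :=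
  tendsto_natCast_atTop_atTop.comp <| (taylor 1 P).tendsto_atTop_of_le_eval hy <| by
    filter_upwards [hK] with i h
    simpa [taylor_eval] using h.le

theorem tendsto_div_pow_natDegree_of_eval_le_lt {ι : Type*} {l : Filter ι} (P : ℝ[X])
    {y : ι → ℝ} {K : ι → ℕ} (hy : Tendsto y l atTop)
    (hK : ∀ᶠ i in l, P.eval (K i : ℝ) ≤ y i ∧ y i < P.eval ((K i : ℝ) + 1)) :
    Tendsto (fun i => y i / (K i : ℝ) ^ P.natDegree) l (𝓝 P.leadingCoeff) := by
  have hKtop := P.tendsto_natCast_atTop_of_lt_eval_add_one hy (hK.mono fun _ h => h.2)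
  have hlower := P.tendsto_eval_div_pow_natDegree.comp hKtop
  -- `taylor 1 P` is `P (· + 1)`, with the same degree and leading coefficient
  have hupper := (taylor 1 P).tendsto_eval_div_pow_natDegree.comp hKtop
  simp only [Function.comp_def, taylor_eval, natDegree_taylor, leadingCoeff_taylor] at hlower hupper
  refine tendsto_of_tendsto_of_tendsto_of_le_of_le' hlower hupper
    (hK.mono fun i h => ?_) (hK.mono fun i h => ?_)
  · exact div_le_div_of_nonneg_right h.1 (by positivity)
  · exact div_le_div_of_nonneg_right h.2.le (by positivity)

theorem tendsto_div_of_eval_le_lt {ι : Type*} {l : Filter ι} {P : ℝ[X]}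
    (hP : 0 < P.leadingCoeff) (hdeg : P.natDegree ≠ 0) {y : ι → ℝ} {x : ℝ} (hx : 0 < x)
    {K L : ι → ℕ} (hy : Tendsto y l atTop)
    (hK : ∀ᶠ i in l, P.eval (K i : ℝ) ≤ y i ∧ y i < P.eval ((K i : ℝ) + 1))
    (hL : ∀ᶠ i in l, P.eval (L i : ℝ) ≤ y i * x ∧ y i * x < P.eval ((L i : ℝ) + 1)) :
    Tendsto (fun i => (L i : ℝ) / K i) l (𝓝 (x ^ ((1 : ℝ) / P.natDegree))) := by
  refine Tendsto.of_pow hdeg (.of_forall fun i => by positivity) ?_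
  have h := ((P.tendsto_div_pow_natDegree_of_eval_le_lt hy hK).mul_const x).div
    (P.tendsto_div_pow_natDegree_of_eval_le_lt (hy.atTop_mul_const hx) hL) hP.ne'
  rw [mul_div_cancel_left₀ _ hP.ne'] at h
  refine h.congr' ?_
  filter_upwards [hy.eventually_gt_atTop 0] with i hi
  rw [Pi.div_apply, div_mul_eq_mul_div, div_div_div_cancel_left' _ _ (by positivity), div_pow]

end Polynomial

namespace Nat

variable {p : ℕ → Prop} [DecidablePred p]

theorem card_filter_Icc_le_findGreatest (N : ℕ) :
    ((Finset.Icc 1 N).filter p).card ≤ findGreatest p N := by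
  calc ((Finset.Icc 1 N).filter p).card ≤ (Finset.Icc 1 (findGreatest p N)).card := by
        refine Finset.card_le_card fun i hi => ?_
        simp only [Finset.mem_filter, Finset.mem_Icc] at hi ⊢
        exact ⟨hi.1.1, le_findGreatest hi.1.2 hi.2⟩
    _ = findGreatest p N := by simp

theorem findGreatest_le_card_filter_Icc_add {T : ℕ}
    (hp : ∀ i j, T ≤ i → i ≤ j → p j → p i) (N : ℕ) :
    findGreatest p N ≤ ((Finset.Icc 1 N).filter p).card + T := by
  set M := findGreatest p N with hM
  have hsub : Finset.Icc (T + 1) M ⊆ (Finset.Icc 1 N).filter p := fun i hi => by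
    simp only [Finset.mem_filter, Finset.mem_Icc] at hi ⊢
    have hpM : p M := findGreatest_of_ne_zero hM.symm (by omega)
    exact ⟨⟨by omega, hi.2.trans (findGreatest_le N)⟩, hp i M (by omega) hi.2 hpM⟩
  have := Finset.card_le_card hsub
  simp only [card_Icc] at this
  omega

theorem apply_findGreatest_le_lt {α : Type*} [LinearOrder α] {f : ℕ → α} {c : α} {N m : ℕ}
    (hm : m ≤ N) (hfm : f m ≤ c) (hN : c < f (N + 1)) :
    f (findGreatest (f · ≤ c) N) ≤ c ∧ c < f (findGreatest (f · ≤ c) N + 1) := by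
  refine ⟨findGreatest_spec (P := (f · ≤ c)) hm hfm, ?_⟩
  rcases (findGreatest_le (P := (f · ≤ c)) N).lt_or_eq with hlt | heq
  · exact not_le.1 (findGreatest_is_greatest (lt_add_one _) hlt)
  · rwa [heq]

theorem tendsto_card_filter_Icc_div {ι : Type*} {l : Filter ι} {p : ι → ℕ → Prop}
    [∀ n, DecidablePred (p n)] {T : ℕ} (hp : ∀ n i j, T ≤ i → i ≤ j → p n j → p n i)
    {N : ι → ℕ} (hN : Tendsto (fun n => (N n : ℝ)) l atTop) {c : ℝ}
    (h : Tendsto (fun n => (findGreatest (p n) (N n) : ℝ) / N n) l (𝓝 c)) :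
    Tendsto (fun n => (((Finset.Icc 1 (N n)).filter (p n)).card : ℝ) / N n) l (𝓝 c) := by
  have hlower : Tendsto (fun n => ((findGreatest (p n) (N n) : ℝ) - T) / N n) l (𝓝 c) := by
    simpa [sub_div] using h.sub (tendsto_const_nhds.div_atTop hN)
  have hcard (n : ι) :
      (findGreatest (p n) (N n) : ℝ) - T ≤ ((Finset.Icc 1 (N n)).filter (p n)).card ∧
        (((Finset.Icc 1 (N n)).filter (p n)).card : ℝ) ≤ findGreatest (p n) (N n) := by
    rw [sub_le_iff_le_add]
    exact ⟨by exact_mod_cast findGreatest_le_card_filter_Icc_add (hp n) (N n),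
      by exact_mod_cast card_filter_Icc_le_findGreatest (N n)⟩
  refine tendsto_of_tendsto_of_tendsto_of_le_of_le hlower h
    (fun n => div_le_div_of_nonneg_right (hcard n).1 (N n).cast_nonneg)
    (fun n => div_le_div_of_nonneg_right (hcard n).2 (N n).cast_nonneg)

end Nat

/-- If `P` is a real polynomial of degree `q ≥ 1` with positive leading
coefficient, and `N n` is (for all sufficiently large `n`) the greatest positive
integer `i` with `P(i) ≤ n`, then for every `x ∈ (0,1]` the proportion of
`1 ≤ i ≤ N(n)` with `P(i) ≤ n·x` tends to `x^{1/q}`. -/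
theorem tendsto_proportion_P_le_nx
    (P : Polynomial ℝ) (q : ℕ) (hq : P.natDegree = q) (hq1 : 1 ≤ q)
    (ha0 : 0 < P.leadingCoeff)
    (N : ℕ → ℕ)
    (hN : ∀ᶠ n : ℕ in atTop,
      1 ≤ N n ∧ P.eval ((N n : ℝ)) ≤ (n : ℝ) ∧
        ∀ i : ℕ, 1 ≤ i → P.eval ((i : ℝ)) ≤ (n : ℝ) → i ≤ N n)
    (x : ℝ) (hx : x ∈ Set.Ioc (0 : ℝ) 1) :
    Tendsto
      (fun n : ℕ =>
        (((Finset.Icc 1 (N n)).filter fun i : ℕ => P.eval ((i : ℝ)) ≤ (n : ℝ) * x).card : ℝ)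
          / (N n : ℝ))
      atTop (𝓝 (x ^ ((1 : ℝ) / q))) := by
  obtain ⟨hx0, hx1⟩ := hx
  subst hq
  set M : ℕ → ℕ := fun n => Nat.findGreatest (fun i : ℕ => P.eval (i : ℝ) ≤ n * x) (N n)
  have hNbr : ∀ᶠ n : ℕ in atTop, P.eval (N n : ℝ) ≤ n ∧ (n : ℝ) < P.eval ((N n : ℝ) + 1) := by
    filter_upwards [hN] with n ⟨_, hle, hmax⟩
    refine ⟨hle, not_le.1 fun h => ?_⟩
    have := hmax (N n + 1) (by omega) (by exact_mod_cast h)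
    omega
  have hMbr : ∀ᶠ n : ℕ in atTop,
      P.eval (M n : ℝ) ≤ n * x ∧ (n : ℝ) * x < P.eval ((M n : ℝ) + 1) := by
    filter_upwards [hN, hNbr, (tendsto_natCast_atTop_atTop.atTop_mul_const hx0).eventually_ge_atTop
      (P.eval 1)] with n hNn hNbrn h1
    have hnx : (n : ℝ) * x ≤ n := mul_le_of_le_one_right n.cast_nonneg hx1
    exact_mod_cast Nat.apply_findGreatest_le_lt (f := fun i : ℕ => P.eval (i : ℝ)) hNn.1
      (by exact_mod_cast h1) (by exact_mod_cast hnx.trans_lt hNbrn.2)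
  obtain ⟨T, hT⟩ := exists_strictMonoOn_Ici_eval ha0 (by omega)
  have hdown (n i j : ℕ) (hi : ⌈T⌉₊ ≤ i) (hij : i ≤ j) (hj : P.eval (j : ℝ) ≤ n * x) :
      P.eval (i : ℝ) ≤ n * x := by
    have hTi : T ≤ i := Nat.ceil_le.1 hi
    exact (hT.monotoneOn hTi (hTi.trans (by exact_mod_cast hij)) (by exact_mod_cast hij)).trans hj
  exact Nat.tendsto_card_filter_Icc_div hdown
    (P.tendsto_natCast_atTop_of_lt_eval_add_one tendsto_natCast_atTop_atTop
      (hNbr.mono fun _ h => h.2))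
    (tendsto_div_of_eval_le_lt ha0 (by omega) hx0 tendsto_natCast_atTop_atTop hNbr hMbr)
end

section
/- Let P be a real polynomial of degree q ≥ 1 with positive leading coefficient, for each sufficiently large integer n let N(n) be the greatest positive integer i such that P(i) ≤ n, and let f : ℝ → ℝ be a bounded continuous function. Then lim_{n→∞} (1/N(n)) Σ_{i=1}^{N(n)} f(P(i)/n) = ∫_0^1 f(u^q) du. -/
open Filter Topology Polynomial MeasureTheory Asymptotics Finset Metric

/-!
Since `N n` is maximal, `P (N n) ≤ n < P (N n + 1)`, and `P (x + 1) ~ P x`, so `n ~ a (N n) ^ q`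
where `a` is the leading coefficient. As `|P x - a x ^ q| ≤ c x ^ (q - 1)` for `x ≥ 1`, this makes
`P i / n` uniformly close to `(i / N n) ^ q` for `1 ≤ i ≤ N n`. By uniform continuity of `f` on
a compact set, the average of `f (P i / n)` is then asymptotic to the right Riemann sum of
`u ↦ f (u ^ q)` with mesh `1 / N n`, which tends to the integral since `N n → ∞`.
-/

theorem Asymptotics.isEquivalent_of_le_of_le {α : Type*} {l : Filter α} {u v w : α → ℝ}
    (huw : u ~[l] w) (hu : ∀ᶠ x in l, 0 < u x) (huv : u ≤ᶠ[l] v) (hvw : v ≤ᶠ[l] w) :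
    v ~[l] u := by
  refine isEquivalent_of_tendsto_one ?_
  have hwu := (isEquivalent_iff_tendsto_one (hu.mono fun _ h => h.ne')).mp huw.symm
  refine tendsto_of_tendsto_of_tendsto_of_le_of_le' tendsto_const_nhds hwu ?_ ?_
  · filter_upwards [hu, huv] with x hux huvx
    exact (one_le_div hux).mpr huvx
  · filter_upwards [hu, hvw] with x hux hvwx
    exact div_le_div_of_nonneg_right hvwx hux.le

namespace Polynomial

theorem exists_abs_eval_le_mul_pow {P : ℝ[X]} {d : ℕ} (hd : P.natDegree ≤ d) :
    ∃ c, ∀ x : ℝ, 1 ≤ x → |P.eval x| ≤ c * x ^ d := by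
  refine ⟨∑ k ∈ range (d + 1), |P.coeff k|, fun x hx => ?_⟩
  rw [eval_eq_sum_range' (Nat.lt_succ_of_le hd), sum_mul]
  refine (abs_sum_le_sum_abs _ _).trans (sum_le_sum fun k hk => ?_)
  rw [abs_mul, abs_pow, abs_of_nonneg (zero_le_one.trans hx)]
  exact mul_le_mul_of_nonneg_left
    (pow_le_pow_right₀ hx (Nat.lt_succ_iff.mp (mem_range.mp hk))) (abs_nonneg _)

theorem exists_abs_eval_sub_leadingCoeff_mul_pow_le (P : ℝ[X]) :
    ∃ c, ∀ x : ℝ, 1 ≤ x →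
      |P.eval x - P.leadingCoeff * x ^ P.natDegree| ≤ c * x ^ (P.natDegree - 1) := by
  obtain ⟨c, hc⟩ := exists_abs_eval_le_mul_pow P.eraseLead_natDegree_le
  refine ⟨c, fun x hx => ?_⟩
  have heq : P.eval x - P.leadingCoeff * x ^ P.natDegree = P.eraseLead.eval x := by
    rw [← self_sub_C_mul_X_pow P, eval_sub, eval_mul, eval_C, eval_pow, eval_X]
  exact heq ▸ hc x hx

theorem isEquivalent_eval_add_const (P : ℝ[X]) (a : ℝ) :
    (fun x => P.eval (x + a)) ~[atTop] fun x => P.eval x := by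
  have hdeg : (X + C a).natDegree = 1 := natDegree_X_add_C a
  have h := (P.comp (X + C a)).isEquivalent_atTop_lead
  rw [natDegree_comp, leadingCoeff_comp (by omega), hdeg, leadingCoeff_X_add_C, one_pow,
    mul_one, mul_one] at h
  simpa using h.trans P.isEquivalent_atTop_lead.symm

theorem isEquivalent_leadingCoeff_mul_pow_of_eval_le_of_lt {P : ℝ[X]} (hdeg : 0 < P.degree)
    (ha : 0 < P.leadingCoeff) {N : ℕ → ℕ} (hN : Tendsto N atTop atTop)
    (hbr : ∀ᶠ n in atTop, P.eval (N n : ℝ) ≤ n ∧ (n : ℝ) < P.eval ((N n : ℝ) + 1)) :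
    (fun n : ℕ => P.leadingCoeff * (N n : ℝ) ^ P.natDegree) ~[atTop] fun n => (n : ℝ) := by
  have hNR : Tendsto (fun n => (N n : ℝ)) atTop atTop := tendsto_natCast_atTop_atTop.comp hN
  have hpos : ∀ᶠ n in atTop, 0 < P.eval (N n : ℝ) :=
    hNR.eventually ((P.tendsto_atTop_of_leadingCoeff_nonneg hdeg ha.le).eventually_gt_atTop 0)
  have hsucc := ((P.isEquivalent_eval_add_const 1).comp_tendsto hNR).symm
  have hn := isEquivalent_of_le_of_le hsucc hpos (hbr.mono fun _ h => h.1)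
    (hbr.mono fun _ h => h.2.le)
  exact (P.isEquivalent_atTop_lead.comp_tendsto hNR).symm.trans hn.symm

theorem abs_eval_div_sub_div_pow_le {P : ℝ[X]} {c : ℝ}
    (hc : ∀ x : ℝ, 1 ≤ x →
      |P.eval x - P.leadingCoeff * x ^ P.natDegree| ≤ c * x ^ (P.natDegree - 1))
    {x M t : ℝ} (hx : 1 ≤ x) (hxM : x ≤ M) (ht : 0 < t) :
    |P.eval x / t - (x / M) ^ P.natDegree| ≤
      c * M ^ (P.natDegree - 1) / t + |P.leadingCoeff * M ^ P.natDegree / t - 1| := by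
  set a := P.leadingCoeff
  set q := P.natDegree
  have hM : 0 < M := by linarith
  have hc0 : 0 ≤ c := by simpa using (abs_nonneg _).trans (hc 1 le_rfl)
  have hpow : (x / M) ^ q ≤ 1 := pow_le_one₀ (by positivity) ((div_le_one hM).mpr hxM)
  have hsplit : P.eval x / t - (x / M) ^ q
      = (P.eval x - a * x ^ q) / t + (x / M) ^ q * (a * M ^ q / t - 1) := by
    rw [div_pow]; field_simp; ring
  rw [hsplit]
  refine (abs_add_le _ _).trans (add_le_add ?_ ?_)
  · rw [abs_div, abs_of_pos ht]
    gcongr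
    exact (hc x hx).trans (by gcongr)
  · rw [abs_mul, abs_of_nonneg (by positivity)]
    exact mul_le_of_le_one_left (abs_nonneg _) hpow

theorem eventually_forall_dist_eval_div_lt {P : ℝ[X]} (hq : 1 ≤ P.natDegree)
    {N : ℕ → ℕ} (hN : Tendsto N atTop atTop)
    (hlead : (fun n : ℕ => P.leadingCoeff * (N n : ℝ) ^ P.natDegree) ~[atTop] fun n => (n : ℝ))
    {ε : ℝ} (hε : 0 < ε) :
    ∀ᶠ n in atTop, ∀ i ∈ Icc 1 (N n),
      dist (P.eval (i : ℝ) / n) (((i : ℝ) / N n) ^ P.natDegree) < ε := by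
  set a := P.leadingCoeff
  set q := P.natDegree
  obtain ⟨c, hc⟩ := P.exists_abs_eval_sub_leadingCoeff_mul_pow_le
  have ha : a ≠ 0 := leadingCoeff_ne_zero.mpr (ne_zero_of_natDegree_gt hq)
  have hratio : Tendsto (fun n : ℕ => a * (N n : ℝ) ^ q / n) atTop (𝓝 1) :=
    (isEquivalent_iff_tendsto_one ((eventually_ne_atTop 0).mono fun _ h => by simpa)).mp hlead
  have hinv : Tendsto (fun n => (N n : ℝ)⁻¹) atTop (𝓝 0) :=
    tendsto_inv_atTop_zero.comp (tendsto_natCast_atTop_atTop.comp hN)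
  have hlow : Tendsto (fun n : ℕ => c * (N n : ℝ) ^ (q - 1) / n) atTop (𝓝 0) := by
    have h := (hratio.const_mul (c / a)).mul hinv
    rw [mul_zero] at h
    refine h.congr' ?_
    filter_upwards [hN.eventually_ge_atTop 1] with n hn
    have hNpos : (0 : ℝ) < N n := by exact_mod_cast hn
    rw [← Nat.sub_add_cancel hq, pow_succ, Nat.add_sub_cancel]
    field_simp
  have herr : Tendsto (fun n : ℕ => c * (N n : ℝ) ^ (q - 1) / n + |a * (N n : ℝ) ^ q / n - 1|)
      atTop (𝓝 0) := by
    simpa using hlow.add (hratio.sub_const 1).abs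
  filter_upwards [herr.eventually (gt_mem_nhds hε), eventually_gt_atTop 0] with n hn hn0 i hi
  have hi := mem_Icc.mp hi
  rw [Real.dist_eq]
  exact (abs_eval_div_sub_div_pow_le hc (by exact_mod_cast hi.1) (by exact_mod_cast hi.2)
    (by exact_mod_cast hn0)).trans_lt hn

end Polynomial

theorem tendsto_average_sub_average_of_dist_lt {α ι : Type*} [PseudoMetricSpace α]
    [ProperSpace α] {f : α → ℝ} (hf : Continuous f) {K : Set α} (hK : IsCompact K)
    {s : ℕ → Finset ι} {x y : ℕ → ι → α} (hy : ∀ n, ∀ i ∈ s n, y n i ∈ K)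
    (hxy : ∀ ε > 0, ∀ᶠ n in atTop, ∀ i ∈ s n, dist (x n i) (y n i) < ε) :
    Tendsto (fun n => (1 / (#(s n) : ℝ)) * ∑ i ∈ s n, f (x n i)
      - (1 / (#(s n) : ℝ)) * ∑ i ∈ s n, f (y n i)) atTop (𝓝 0) := by
  rw [Metric.tendsto_nhds]
  intro ε hε
  obtain ⟨δ, hδ, hfδ⟩ := uniformContinuousOn_iff_le.mp
    ((hK.cthickening (r := 1)).uniformContinuousOn_of_continuous hf.continuousOn)
    (ε / 2) (half_pos hε)
  filter_upwards [hxy (min δ 1) (lt_min hδ one_pos)] with n hn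
  have hterm : ∀ i ∈ s n, |f (x n i) - f (y n i)| ≤ ε / 2 := fun i hi => by
    have hd := (hn i hi).le
    have hyK := hy n i hi
    exact hfδ _ (mem_cthickening_of_dist_le _ _ _ _ hyK (hd.trans (min_le_right _ _))) _
      (self_subset_cthickening _ hyK) (hd.trans (min_le_left _ _))
  have hsum : |∑ i ∈ s n, (f (x n i) - f (y n i))| ≤ #(s n) * (ε / 2) := by
    rw [← nsmul_eq_mul]
    exact (abs_sum_le_sum_abs _ _).trans (sum_le_card_nsmul _ _ _ hterm)
  rw [Real.dist_eq, sub_zero, ← mul_sub, ← sum_sub_distrib, abs_mul, abs_of_nonneg (by positivity)]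
  rcases eq_or_ne (#(s n) : ℝ) 0 with h0 | h0
  · simpa [h0] using hε
  · calc 1 / (#(s n) : ℝ) * |∑ i ∈ s n, (f (x n i) - f (y n i))|
        ≤ 1 / (#(s n) : ℝ) * (#(s n) * (ε / 2)) := by gcongr
      _ < ε := by field_simp; linarith

theorem abs_integral_sub_mul_le {g : ℝ → ℝ} {a b c ε : ℝ} (hab : a ≤ b)
    (hg : IntervalIntegrable g volume a b) (h : ∀ x ∈ Set.Ioc a b, |g c - g x| ≤ ε) :
    |(b - a) * g c - ∫ x in a..b, g x| ≤ ε * (b - a) := by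
  have hconst : (b - a) * g c = ∫ _ in a..b, g c := by simp
  rw [hconst, ← intervalIntegral.integral_sub intervalIntegrable_const hg]
  have hbound := intervalIntegral.norm_integral_le_of_norm_le_const (f := fun x => g c - g x)
    fun x hx => (h x (Set.uIoc_of_le hab ▸ hx) : ‖g c - g x‖ ≤ ε)
  rwa [abs_of_nonneg (sub_nonneg.mpr hab)] at hbound

theorem tendsto_riemann_sum_Icc_zero_one {g : ℝ → ℝ} (hg : ContinuousOn g (Set.Icc 0 1)) :
    Tendsto (fun m : ℕ => (1 / (m : ℝ)) * ∑ i ∈ Icc 1 m, g (i / m)) atTop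
      (𝓝 (∫ u in Set.Icc (0 : ℝ) 1, g u)) := by
  rw [integral_Icc_eq_integral_Ioc, ← intervalIntegral.integral_of_le zero_le_one,
    Metric.tendsto_nhds]
  intro ε hε
  obtain ⟨δ, hδ, hgδ⟩ := uniformContinuousOn_iff_le.mp
    (isCompact_Icc.uniformContinuousOn_of_continuous hg) (ε / 2) (half_pos hε)
  filter_upwards [eventually_gt_atTop 0,
    tendsto_one_div_atTop_nhds_zero_nat.eventually (eventually_le_nhds hδ)] with m hm hmδ
  have hm' : (0 : ℝ) < m := by exact_mod_cast hm
  set t : ℕ → ℝ := fun k => k / m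
  have hmem : ∀ k ≤ m, t k ∈ Set.Icc (0 : ℝ) 1 := fun k hk =>
    ⟨by positivity, div_le_one_of_le₀ (by exact_mod_cast hk) hm'.le⟩
  have hstep : ∀ k, t (k + 1) - t k = 1 / m := fun k => by simp only [t]; push_cast; ring
  have hcell : ∀ k ∈ range m, |1 / (m : ℝ) * g (t (k + 1)) - ∫ x in t k..t (k + 1), g x|
      ≤ ε / 2 * (1 / m) := fun k hk => by
    have hk := mem_range.mp hk
    have hsub : Set.Icc (t k) (t (k + 1)) ⊆ Set.Icc 0 1 :=
      Set.Icc_subset_Icc (hmem k hk.le).1 (hmem (k + 1) hk).2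
    have hle : t k ≤ t (k + 1) := by linarith [hstep k, one_div_pos.mpr hm']
    rw [← hstep k]
    refine abs_integral_sub_mul_le hle ((hg.mono hsub).intervalIntegrable_of_Icc hle)
      fun x hx => hgδ _ (hmem (k + 1) hk) _ (hsub (Set.Ioc_subset_Icc_self hx)) ?_
    rw [Real.dist_eq, abs_of_nonneg (by linarith [hx.2])]
    linarith [hx.1, hstep k]
  have hsum : ∑ i ∈ Icc 1 m, g (i / m) = ∑ k ∈ range m, g (t (k + 1)) := by
    rw [← Ico_add_one_right_eq_Icc, sum_Ico_eq_sum_range]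
    simp [t, add_comm]
  have hint : ∑ k ∈ range m, ∫ x in t k..t (k + 1), g x = ∫ x in (0 : ℝ)..1, g x := by
    rw [intervalIntegral.sum_integral_adjacent_intervals fun k hk =>
      (hg.mono (Set.Icc_subset_Icc (hmem k hk.le).1 (hmem (k + 1) hk).2)).intervalIntegrable_of_Icc
        (by linarith [hstep k, one_div_pos.mpr hm'])]
    simp [t, hm'.ne']
  rw [Real.dist_eq, hsum, ← hint, mul_sum, ← sum_sub_distrib]
  calc |∑ k ∈ range m, (1 / (m : ℝ) * g (t (k + 1)) - ∫ x in t k..t (k + 1), g x)|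
      ≤ ∑ _k ∈ range m, ε / 2 * (1 / m) := (abs_sum_le_sum_abs _ _).trans (sum_le_sum hcell)
    _ < ε := by simp only [sum_const, card_range, nsmul_eq_mul]; field_simp; linarith

theorem tendsto_average_f_P_div_n_general
    (P : Polynomial ℝ) (q : ℕ) (hq : P.natDegree = q) (hq1 : 1 ≤ q)
    (ha0 : 0 < P.leadingCoeff)
    (N : ℕ → ℕ)
    (hN : ∀ᶠ n : ℕ in atTop,
      1 ≤ N n ∧ P.eval ((N n : ℝ)) ≤ (n : ℝ) ∧
        ∀ i : ℕ, 1 ≤ i → P.eval ((i : ℝ)) ≤ (n : ℝ) → i ≤ N n)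
    (f : ℝ → ℝ) (hf : Continuous f) :
    Tendsto
      (fun n : ℕ =>
        (1 / (N n : ℝ)) * ∑ i ∈ Finset.Icc 1 (N n), f (P.eval ((i : ℝ)) / n))
      atTop (𝓝 (∫ u in Set.Icc (0 : ℝ) 1, f (u ^ q))) := by
  subst hq
  have hNtop : Tendsto N atTop atTop := tendsto_atTop.mpr fun b => by
    filter_upwards [hN, tendsto_natCast_atTop_atTop.eventually_ge_atTop
      (P.eval ((max b 1 : ℕ) : ℝ))] with n hn hb
    exact (le_max_left b 1).trans (hn.2.2 _ (le_max_right b 1) hb)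
  have hbracket : ∀ᶠ n in atTop, P.eval (N n : ℝ) ≤ n ∧ (n : ℝ) < P.eval ((N n : ℝ) + 1) := by
    filter_upwards [hN] with n hn
    refine ⟨hn.2.1, lt_of_not_ge fun h => ?_⟩
    have := hn.2.2 (N n + 1) le_add_self (by exact_mod_cast h)
    omega
  have hlead := isEquivalent_leadingCoeff_mul_pow_of_eval_le_of_lt
    (natDegree_pos_iff_degree_pos.mp hq1) ha0 hNtop hbracket
  have hmem (n i : ℕ) (hi : i ∈ Icc 1 (N n)) : ((i : ℝ) / N n) ^ P.natDegree ∈ Set.Icc 0 1 :=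
    ⟨by positivity, pow_le_one₀ (by positivity)
      (div_le_one_of_le₀ (by exact_mod_cast (mem_Icc.mp hi).2) (by positivity))⟩
  have hclose := tendsto_average_sub_average_of_dist_lt hf (isCompact_Icc (a := 0) (b := 1))
    (s := fun n => Icc 1 (N n)) hmem fun ε hε =>
      eventually_forall_dist_eval_div_lt hq1 hNtop hlead hε
  have hriemann := (tendsto_riemann_sum_Icc_zero_one
    (hf.comp (continuous_pow P.natDegree)).continuousOn).comp hNtop
  simpa using hclose.add hriemann

/-- If `P` is a real polynomial of degree `q ≥ 1` with positive leading
coefficient, `N n` is (for all sufficiently large `n`) the greatest positive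
integer `i` with `P(i) ≤ n`, and `f : ℝ → ℝ` is bounded continuous, then
`lim_{n→∞} (1/N(n)) Σ_{i=1}^{N(n)} f(P(i)/n) = ∫_0^1 f(u^q) du`. -/
theorem tendsto_average_f_P_div_n
    (P : Polynomial ℝ) (q : ℕ) (hq : P.natDegree = q) (hq1 : 1 ≤ q)
    (ha0 : 0 < P.leadingCoeff)
    (N : ℕ → ℕ)
    (hN : ∀ᶠ n : ℕ in atTop,
      1 ≤ N n ∧ P.eval ((N n : ℝ)) ≤ (n : ℝ) ∧
        ∀ i : ℕ, 1 ≤ i → P.eval ((i : ℝ)) ≤ (n : ℝ) → i ≤ N n)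
    (f : ℝ → ℝ) (hf : Continuous f) (hbd : ∃ M : ℝ, ∀ x : ℝ, |f x| ≤ M) :
    Tendsto
      (fun n : ℕ =>
        (1 / (N n : ℝ)) * ∑ i ∈ Finset.Icc 1 (N n), f (P.eval ((i : ℝ)) / n))
      atTop (𝓝 (∫ u in Set.Icc (0 : ℝ) 1, f (u ^ q))) :=
  tendsto_average_f_P_div_n_general P q hq hq1 ha0 N hN f hf
end
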